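/- arXiv:2206.04649 — 10 statements merged into one kernel-verified Lean document; each statement's English description precedes it below -/
import Mathlib

section
/- If W : ℝ → [0,∞) is C² with W(a) = W(b) = 0 and there exists κ > 0 such that W''(u) ≥ 2κ² for every u outside (a,b), then |W'(u)|/√(W(u)) ≥ κ for every u ∈ ℝ \ [a,b]. -/
/-!
Since `W ≥ 0` vanishes at `b`, also `W' b = 0`, and uniform convexity makes `W'` and then `W`
positive on `(b, ∞)`. There `(W')² - κ² W` has derivative `W' (2 W'' - κ²) ≥ 0` and vanishes at
`b`, so `κ² W ≤ (W')²`. Left of `a` this is the same argument for `u ↦ W (-u)`.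
-/

open Set

theorem pos_of_deriv_pos_of_lt {g : ℝ → ℝ} {b : ℝ} (hg : ContinuousOn g (Ici b)) (hb : g b = 0)
    (hg' : ∀ u, b < u → 0 < deriv g u) {u : ℝ} (hu : b < u) : 0 < g u := by
  have hmono : StrictMonoOn g (Ici b) :=
    strictMonoOn_of_deriv_pos (convex_Ici b) hg fun x hx => hg' x (by rwa [interior_Ici] at hx)
  simpa only [hb] using hmono self_mem_Ici hu.le hu

theorem sq_mul_le_deriv_sq_of_le {f : ℝ → ℝ} {b κ : ℝ} (hf : Differentiable ℝ f)
    (hf' : Differentiable ℝ (deriv f)) (hb : f b = 0) (hb' : deriv f b = 0)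
    (hf'_nonneg : ∀ u, b < u → 0 ≤ deriv f u)
    (hf'' : ∀ u, b < u → κ ^ 2 ≤ 2 * deriv (deriv f) u) {u : ℝ} (hu : b ≤ u) :
    κ ^ 2 * f u ≤ deriv f u ^ 2 := by
  have hderiv : ∀ x, HasDerivAt (fun t => deriv f t ^ 2 - κ ^ 2 * f t)
      (deriv f x * (2 * deriv (deriv f) x - κ ^ 2)) x := fun x =>
    (((hf' x).hasDerivAt.fun_pow 2).fun_sub ((hf x).hasDerivAt.const_mul (κ ^ 2))).congr_deriv
      (by push_cast; ring)
  have hmono : MonotoneOn (fun t => deriv f t ^ 2 - κ ^ 2 * f t) (Ici b) := by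
    refine monotoneOn_of_deriv_nonneg (convex_Ici b)
      (fun x _ => (hderiv x).continuousAt.continuousWithinAt)
      (fun x _ => (hderiv x).differentiableAt.differentiableWithinAt) fun x hx => ?_
    rw [interior_Ici] at hx
    rw [(hderiv x).deriv]
    exact mul_nonneg (hf'_nonneg x hx) (sub_nonneg.mpr (hf'' x hx))
  have := hmono self_mem_Ici hu hu
  simp only [hb, hb', mul_zero, sub_zero] at this
  linarith

theorem le_abs_div_sqrt_of_sq_mul_le {κ w d : ℝ} (hκ : 0 ≤ κ) (hw : 0 < w)
    (h : κ ^ 2 * w ≤ d ^ 2) : κ ≤ |d| / √w := by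
  rw [le_div_iff₀ (Real.sqrt_pos.mpr hw)]
  calc κ * √w = √(κ ^ 2 * w) := by rw [Real.sqrt_mul (sq_nonneg κ), Real.sqrt_sq hκ]
    _ ≤ √(d ^ 2) := Real.sqrt_le_sqrt h
    _ = |d| := Real.sqrt_sq_eq_abs d

theorem le_abs_deriv_div_sqrt_of_lt {W : ℝ → ℝ} {b κ : ℝ} (hWnn : ∀ u, 0 ≤ W u)
    (hWC2 : ContDiff ℝ 2 W) (hWb : W b = 0) (hκ : 0 < κ)
    (hW'' : ∀ u, b < u → 2 * κ ^ 2 ≤ iteratedDeriv 2 W u) {u : ℝ} (hu : b < u) :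
    κ ≤ |deriv W u| / √(W u) := by
  have hW : Differentiable ℝ W := hWC2.differentiable two_ne_zero
  have hW' : Differentiable ℝ (deriv W) := hWC2.differentiable_deriv_two
  have hW''_eq : ∀ x, iteratedDeriv 2 W x = deriv (deriv W) x := fun x => by
    rw [iteratedDeriv_succ, iteratedDeriv_one]
  have hWb' : deriv W b = 0 :=
    IsLocalMin.deriv_eq_zero (Filter.Eventually.of_forall fun x => hWb ▸ hWnn x)
  have hW'_pos : ∀ x, b < x → 0 < deriv W x :=
    fun x => pos_of_deriv_pos_of_lt hW'.continuous.continuousOn hWb' fun y hy => by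
      rw [← hW''_eq]
      exact lt_of_lt_of_le (by positivity) (hW'' y hy)
  refine le_abs_div_sqrt_of_sq_mul_le hκ.le
    (pos_of_deriv_pos_of_lt hW.continuous.continuousOn hWb hW'_pos hu)
    (sq_mul_le_deriv_sq_of_le hW hW' hWb hWb' (fun x hx => (hW'_pos x hx).le) (fun x hx => ?_)
      hu.le)
  rw [← hW''_eq]
  linarith [hW'' x hx, sq_nonneg κ]

theorem stmt1_general (W : ℝ → ℝ) (a b κ : ℝ)
    (hWnn : ∀ u, 0 ≤ W u) (hWC2 : ContDiff ℝ 2 W)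
    (hWa : W a = 0) (hWb : W b = 0) (hκ : 0 < κ)
    (hW'' : ∀ u, u ∉ Set.Ioo a b → 2 * κ ^ 2 ≤ iteratedDeriv 2 W u) :
    ∀ u, u ∉ Set.Icc a b → κ ≤ |deriv W u| / Real.sqrt (W u) := by
  intro u hu
  rcases not_and_or.mp hu with hua | hbu
  · have hreflect := le_abs_deriv_div_sqrt_of_lt (W := fun x => W (-x)) (b := -a)
      (fun x => hWnn (-x)) (hWC2.comp contDiff_neg) (by simpa using hWa) hκ
      (fun v hv => by
        rw [iteratedDeriv_comp_neg]
        simpa using hW'' (-v) fun h => lt_asymm h.1 (neg_lt.mp hv))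
      (neg_lt_neg (not_le.mp hua))
    simpa [deriv_comp_neg] using hreflect
  · exact le_abs_deriv_div_sqrt_of_lt hWnn hWC2 hWb hκ
      (fun v hv => hW'' v fun h => lt_asymm h.2 hv) (not_le.mp hbu)

/-- If `W : ℝ → [0,∞)` is `C²` with `W a = W b = 0`, and `κ > 0` satisfies
`W'' u ≥ 2κ²` for every `u` outside `(a,b)`, then `|W' u| / √(W u) ≥ κ`
for every `u ∈ ℝ \ [a,b]`. -/
theorem stmt1 (W : ℝ → ℝ) (a b κ : ℝ) (hab : a < b)
    (hWnn : ∀ u, 0 ≤ W u) (hWC2 : ContDiff ℝ 2 W)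
    (hWa : W a = 0) (hWb : W b = 0) (hκ : 0 < κ)
    (hW'' : ∀ u, u ∉ Set.Ioo a b → 2 * κ ^ 2 ≤ iteratedDeriv 2 W u) :
    ∀ u, u ∉ Set.Icc a b → κ ≤ |deriv W u| / Real.sqrt (W u) :=
  stmt1_general W a b κ hWnn hWC2 hWa hWb hκ hW''
end

section
/- Let W : ℝ → [0,∞) satisfy: W ∈ C²(ℝ), W(a) = W(b) = 0, W > 0 on (a,b), and W''(a) > 0, W''(b) > 0. Let q₀ solve q₀'(s) = √(W(q₀(s))) with q₀(0) = (a+b)/2. Then q₀ is defined on all of ℝ and a < q₀(s) < b for every s ∈ ℝ. -/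
/-!
The solution is the inverse of `T q = ∫ u in m..q, (√(W u))⁻¹`, `m = (a + b) / 2`. Since `W` is
`C²`, nonnegative and vanishes at `a` and `b`, it vanishes there to second order, so
`√W ≤ c · dist(·, {a, b})` on `(a, b)`. Hence `1 / √W` has a logarithmically divergent integral at
both endpoints, `T` is an increasing bijection of `(a, b)` onto `ℝ`, and its inverse is defined
for all times and never reaches `a` or `b`.
-/

open Set Filter Topology intervalIntegral

theorem abs_le_mul_sq_of_eq_zero_of_deriv_eq_zero {f : ℝ → ℝ} {x y M : ℝ}
    (hf : Differentiable ℝ f) (hf' : Differentiable ℝ (deriv f))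
    (hM : ∀ t ∈ uIcc x y, |deriv (deriv f) t| ≤ M) (hfx : f x = 0) (hf'x : deriv f x = 0) :
    |f y| ≤ M * (y - x) ^ 2 := by
  have hx : x ∈ uIcc x y := left_mem_uIcc
  have hy : y ∈ uIcc x y := right_mem_uIcc
  have hM0 : 0 ≤ M := (abs_nonneg _).trans (hM x hx)
  have hderiv : ∀ t ∈ uIcc x y, |deriv f t| ≤ M * |y - x| := fun t ht => by
    have := Convex.norm_image_sub_le_of_norm_deriv_le (fun t _ => hf' t) hM (convex_uIcc x y) hx ht
    rw [hf'x, sub_zero] at this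
    exact this.trans (mul_le_mul_of_nonneg_left (abs_sub_left_of_mem_uIcc ht) hM0)
  have := Convex.norm_image_sub_le_of_norm_deriv_le (fun t _ => hf t) hderiv (convex_uIcc x y) hx hy
  rwa [hfx, sub_zero, Real.norm_eq_abs, Real.norm_eq_abs, mul_assoc, ← sq, sq_abs] at this

theorem tendsto_integral_inv_nhdsLT_atTop {V : ℝ → ℝ} {m b c : ℝ} (hmb : m < b)
    (hV : ContinuousOn V (Ico m b)) (hVpos : ∀ u ∈ Ico m b, 0 < V u)
    (hVb : ∀ u ∈ Ico m b, V u ≤ c * (b - u)) :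
    Tendsto (fun q => ∫ u in m..q, (V u)⁻¹) (𝓝[<] b) atTop := by
  have hm : m ∈ Ico m b := ⟨le_rfl, hmb⟩
  have hc : 0 < c := pos_of_mul_pos_left ((hVpos m hm).trans_le (hVb m hm)) (sub_pos.2 hmb).le
  have hlower : ∀ q ∈ Ico m b,
      c⁻¹ * Real.log ((b - m) / (b - q)) ≤ ∫ u in m..q, (V u)⁻¹ := by
    intro q hq
    have hsub : Icc m q ⊆ Ico m b := Icc_subset_Ico_right hq.2
    have hbu : ∀ u ∈ Icc m q, 0 < b - u := fun u hu => sub_pos.2 (hsub hu).2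
    calc c⁻¹ * Real.log ((b - m) / (b - q))
        = ∫ u in m..q, c⁻¹ * (b - u)⁻¹ := by
          rw [integral_const_mul, integral_comp_sub_left (fun x => x⁻¹),
            integral_inv_of_pos (hbu q ⟨hq.1, le_rfl⟩) (hbu m ⟨le_rfl, hq.1⟩)]
      _ ≤ ∫ u in m..q, (V u)⁻¹ := by
          refine integral_mono_on hq.1 ?_ ?_ fun u hu => ?_
          · exact (continuousOn_const.mul ((continuousOn_const.sub continuousOn_id).inv₀
              fun u hu => (hbu u hu).ne')).intervalIntegrable_of_Icc hq.1
          · exact ((hV.mono hsub).inv₀ fun u hu =>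
              (hVpos u (hsub hu)).ne').intervalIntegrable_of_Icc hq.1
          · rw [← mul_inv]
            exact inv_anti₀ (hVpos u (hsub hu)) (hVb u (hsub hu))
  refine tendsto_atTop_mono' _ (eventually_of_mem (Ico_mem_nhdsLT hmb) hlower) ?_
  have hdist : Tendsto (fun q => b - q) (𝓝[<] b) (𝓝[>] 0) := by
    refine tendsto_nhdsWithin_iff.2
      ⟨?_, eventually_nhdsWithin_of_forall fun q hq => mem_Ioi.2 (sub_pos.2 hq)⟩
    simpa using ((continuous_sub_left b).tendsto b).mono_left nhdsWithin_le_nhds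
  simp_rw [div_eq_mul_inv]
  exact (Real.tendsto_log_atTop.comp ((tendsto_inv_nhdsGT_zero.comp hdist).const_mul_atTop
    (sub_pos.2 hmb))).const_mul_atTop (inv_pos.2 hc)

theorem tendsto_integral_inv_nhdsGT_atBot {V : ℝ → ℝ} {a m c : ℝ} (ham : a < m)
    (hV : ContinuousOn V (Ioc a m)) (hVpos : ∀ u ∈ Ioc a m, 0 < V u)
    (hVa : ∀ u ∈ Ioc a m, V u ≤ c * (u - a)) :
    Tendsto (fun q => ∫ u in m..q, (V u)⁻¹) (𝓝[>] a) atBot := by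
  have hneg : ∀ u ∈ Ico (-m) (-a), -u ∈ Ioc a m := fun u hu =>
    ⟨lt_neg_of_lt_neg hu.2, neg_le.1 hu.1⟩
  have hrefl : Tendsto (fun r => ∫ u in -m..r, (V (-u))⁻¹) (𝓝[<] (-a)) atTop :=
    tendsto_integral_inv_nhdsLT_atTop (c := c) (neg_lt_neg ham) (hV.comp continuousOn_neg hneg)
      (fun u hu => hVpos _ (hneg u hu)) fun u hu => (hVa _ (hneg u hu)).trans_eq (by ring)
  have hsymm : ∀ q, ∫ u in -m..-q, (V (-u))⁻¹ = -∫ u in m..q, (V u)⁻¹ := fun q => by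
    rw [integral_comp_neg (fun u => (V u)⁻¹), neg_neg, neg_neg, integral_symm]
  simpa [Function.comp_def, hsymm] using
    tendsto_neg_atTop_atBot.comp (hrefl.comp tendsto_neg_nhdsGT)

theorem exists_hasDerivAt_inverse_of_surjOn {T T' : ℝ → ℝ} {a b : ℝ}
    (hT : ∀ x ∈ Ioo a b, HasDerivAt T (T' x) x) (hT' : ∀ x ∈ Ioo a b, 0 < T' x)
    (hsurj : SurjOn T (Ioo a b) univ) :
    ∃ q : ℝ → ℝ, (∀ s, q s ∈ Ioo a b) ∧ (∀ x ∈ Ioo a b, q (T x) = x) ∧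
      ∀ s, HasDerivAt q (T' (q s))⁻¹ s := by
  have hmono : StrictMonoOn T (Ioo a b) :=
    strictMonoOn_of_hasDerivWithinAt_pos (convex_Ioo a b)
      (fun x hx => (hT x hx).continuousAt.continuousWithinAt)
      (fun x hx => (hT x (interior_subset hx)).hasDerivWithinAt)
      (fun x hx => hT' x (interior_subset hx))
  let e : Ioo a b ≃o ℝ := StrictMono.orderIsoOfSurjective ((Ioo a b).domRestrict T)
    hmono.domRestrict (surjOn_iff_surjective.1 hsurj)
  refine ⟨fun s => e.symm s, fun s => (e.symm s).2,
    fun x hx => congrArg Subtype.val (e.symm_apply_apply ⟨x, hx⟩), fun s => ?_⟩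
  exact HasDerivAt.of_local_left_inverse
    (continuous_subtype_val.comp e.symm.continuous).continuousAt (hT _ (e.symm s).2)
    (hT' _ (e.symm s).2).ne' (Eventually.of_forall e.apply_symm_apply)

theorem exists_global_solution_of_le_mul_dist {V : ℝ → ℝ} {a b c m : ℝ}
    (hV : ContinuousOn V (Ioo a b)) (hVpos : ∀ u ∈ Ioo a b, 0 < V u)
    (hVa : ∀ u ∈ Ioo a b, V u ≤ c * (u - a)) (hVb : ∀ u ∈ Ioo a b, V u ≤ c * (b - u))
    (hm : m ∈ Ioo a b) :
    ∃ q : ℝ → ℝ, q 0 = m ∧ (∀ s, HasDerivAt q (V (q s)) s) ∧ ∀ s, q s ∈ Ioo a b := by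
  have hab : a < b := hm.1.trans hm.2
  have hVinv : ContinuousOn (fun u => (V u)⁻¹) (Ioo a b) := hV.inv₀ fun u hu => (hVpos u hu).ne'
  set T : ℝ → ℝ := fun x => ∫ u in m..x, (V u)⁻¹
  have hT : ∀ x ∈ Ioo a b, HasDerivAt T (V x)⁻¹ x := fun x hx =>
    integral_hasDerivAt_right
      ((hVinv.mono (ordConnected_Ioo.uIcc_subset hm hx)).intervalIntegrable)
      (hVinv.stronglyMeasurableAtFilter isOpen_Ioo x hx)
      (hVinv.continuousAt (isOpen_Ioo.mem_nhds hx))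
  have hsurj : SurjOn T (Ioo a b) univ := by
    refine ContinuousOn.surjOn_of_tendsto (nonempty_Ioo.2 hab)
      (fun x hx => (hT x hx).continuousAt.continuousWithinAt) ?_ ?_
    · rw [tendsto_comp_coe_Ioo_atBot hab]
      have hsub : Ioc a m ⊆ Ioo a b := Ioc_subset_Ioo_right hm.2
      exact tendsto_integral_inv_nhdsGT_atBot hm.1 (hV.mono hsub) (fun u hu => hVpos u (hsub hu))
        fun u hu => hVa u (hsub hu)
    · rw [tendsto_comp_coe_Ioo_atTop hab]
      have hsub : Ico m b ⊆ Ioo a b := Ico_subset_Ioo_left hm.1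
      exact tendsto_integral_inv_nhdsLT_atTop hm.2 (hV.mono hsub) (fun u hu => hVpos u (hsub hu))
        fun u hu => hVb u (hsub hu)
  obtain ⟨q, hq_mem, hq_T, hq_deriv⟩ :=
    exists_hasDerivAt_inverse_of_surjOn hT (fun x hx => inv_pos.2 (hVpos x hx)) hsurj
  refine ⟨q, ?_, fun s => by simpa using hq_deriv s, hq_mem⟩
  simpa [T] using hq_T m hm

theorem stmt3_general (W : ℝ → ℝ) (a b : ℝ) (hab : a < b) (hWnn : ∀ u, 0 ≤ W u)
    (hWC2 : ContDiff ℝ 2 W) (hWa : W a = 0) (hWb : W b = 0)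
    (hWpos : ∀ u ∈ Set.Ioo a b, 0 < W u) :
    ∃ q₀ : ℝ → ℝ, q₀ 0 = (a + b) / 2 ∧
      (∀ s, HasDerivAt q₀ (Real.sqrt (W (q₀ s))) s) ∧
      ∀ s, q₀ s ∈ Set.Ioo a b := by
  have hW : Differentiable ℝ W := hWC2.differentiable two_ne_zero
  have hW' : ContDiff ℝ 1 (deriv W) := hWC2.deriv' (n := 1)
  obtain ⟨M, hM⟩ : ∃ M, ∀ t ∈ Icc a b, |deriv (deriv W) t| ≤ M :=
    isCompact_Icc.exists_bound_of_continuousOn (hW'.continuous_deriv le_rfl).continuousOn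
  have hW'a : deriv W a = 0 := IsLocalMin.deriv_eq_zero (Eventually.of_forall fun u => hWa ▸ hWnn u)
  have hW'b : deriv W b = 0 := IsLocalMin.deriv_eq_zero (Eventually.of_forall fun u => hWb ▸ hWnn u)
  have hsqrt : ∀ e u, uIcc e u ⊆ Icc a b → W e = 0 → deriv W e = 0 → √(W u) ≤ √M * |u - e| :=
    fun e u hsub hWe hW'e => by
      have := abs_le_mul_sq_of_eq_zero_of_deriv_eq_zero hW (hW'.differentiable one_ne_zero)
        (fun t ht => hM t (hsub ht)) hWe hW'e
      simpa [Real.sqrt_mul' M (sq_nonneg _), Real.sqrt_sq_eq_abs] using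
        Real.sqrt_le_sqrt ((le_abs_self _).trans this)
  refine exists_global_solution_of_le_mul_dist (c := √M)
    (Real.continuous_sqrt.comp hWC2.continuous).continuousOn
    (fun u hu => Real.sqrt_pos.2 (hWpos u hu)) (fun u hu => ?_) (fun u hu => ?_)
    ⟨by linarith, by linarith⟩
  · simpa [abs_of_pos (sub_pos.2 hu.1)] using
      hsqrt a u (uIcc_of_le hu.1.le ▸ Icc_subset_Icc_right hu.2.le) hWa hW'a
  · simpa [abs_of_neg (sub_neg.2 hu.2)] using
      hsqrt b u (uIcc_of_ge hu.2.le ▸ Icc_subset_Icc_left hu.1.le) hWb hW'b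

/-- Under assumptions (W1), (W2), (W3), the optimal profile `q₀` solving
`q₀' = √(W ∘ q₀)`, `q₀ 0 = (a+b)/2` is globally defined and takes values in `(a,b)`. -/
theorem stmt3 (W : ℝ → ℝ) (a b : ℝ) (hab : a < b) (hWnn : ∀ u, 0 ≤ W u)
    (hWC2 : ContDiff ℝ 2 W) (hWa : W a = 0) (hWb : W b = 0)
    (hWpos : ∀ u ∈ Set.Ioo a b, 0 < W u)
    (hW''a : 0 < iteratedDeriv 2 W a) (hW''b : 0 < iteratedDeriv 2 W b) :
    ∃ q₀ : ℝ → ℝ, q₀ 0 = (a + b) / 2 ∧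
      (∀ s, HasDerivAt q₀ (Real.sqrt (W (q₀ s))) s) ∧
      ∀ s, q₀ s ∈ Set.Ioo a b :=
  stmt3_general W a b hab hWnn hWC2 hWa hWb hWpos
end

section
/- Let W : ℝ → [0,∞) be continuous with W(a) = W(b) = 0 and W > 0 on (a,b), and let q₀ : ℝ → (a,b) solve q₀' = √(W ∘ q₀) with q₀(0) = (a+b)/2. Then q₀ is strictly increasing and is a bijection from ℝ onto (a,b). -/
/-!
Since `W > 0` on `(a,b)` and `q₀` stays in `(a,b)`, the derivative of `q₀` is positive, so `q₀`
is strictly increasing; being bounded, it has limits at `±∞`. A solution of an autonomous ODE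
`q' = F ∘ q` can only converge to a zero of `F` (by the mean value theorem `q(s+1) - q(s) → 0`
equals `F (q ξ)` with `ξ → ∞`), and `√W` has no zero in `(a,b)`, so the limits are `a` and `b`.
The intermediate value theorem then gives every value in `(a,b)`.
-/

open Filter Set Topology

lemma eq_zero_of_tendsto_atTop_of_hasDerivAt {f f' : ℝ → ℝ} {L c : ℝ}
    (hf : ∀ x, HasDerivAt f (f' x) x) (hfL : Tendsto f atTop (𝓝 L))
    (hf' : Tendsto f' atTop (𝓝 c)) : c = 0 := by
  have hslope : ∀ s : ℝ, ∃ ξ ∈ Ioo s (s + 1), f' ξ = f (s + 1) - f s := fun s => by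
    simpa using exists_hasDerivAt_eq_slope f f' (lt_add_one s)
      (fun x _ => (hf x).continuousAt.continuousWithinAt) (fun x _ => hf x)
  choose ξ hξ hξ_eq using hslope
  have hξ_top : Tendsto ξ atTop atTop :=
    tendsto_atTop_mono (fun s => (hξ s).1.le) tendsto_id
  have hdiff : Tendsto (fun s => f (s + 1) - f s) atTop (𝓝 (L - L)) :=
    (hfL.comp (tendsto_atTop_add_const_right _ 1 tendsto_id)).sub hfL
  rw [sub_self] at hdiff
  exact tendsto_nhds_unique (hf'.comp hξ_top) (hdiff.congr fun s => (hξ_eq s).symm)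

section Autonomous

variable {F q : ℝ → ℝ} {a b : ℝ}

lemma tendsto_atTop_of_hasDerivAt_comp (hF : Continuous F) (hFpos : ∀ u ∈ Ioo a b, 0 < F u)
    (hmem : ∀ s, q s ∈ Ioo a b) (hq : ∀ s, HasDerivAt q (F (q s)) s) :
    Tendsto q atTop (𝓝 b) := by
  have hmono : Monotone q :=
    (strictMono_of_hasDerivAt_pos hq fun s => hFpos _ (hmem s)).monotone
  have hbdd : BddAbove (range q) := ⟨b, by rintro _ ⟨s, rfl⟩; exact (hmem s).2.le⟩
  have hlim := tendsto_atTop_ciSup hmono hbdd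
  set L := ⨆ s, q s
  have hFL : F L = 0 :=
    eq_zero_of_tendsto_atTop_of_hasDerivAt hq hlim ((hF.tendsto L).comp hlim)
  have haL : a < L := (hmem 0).1.trans_le (le_ciSup hbdd 0)
  have hLb : L ≤ b := ciSup_le fun s => (hmem s).2.le
  obtain rfl : L = b := hLb.eq_of_not_lt fun hLb' => (hFpos L ⟨haL, hLb'⟩).ne' hFL
  exact hlim

lemma tendsto_atBot_of_hasDerivAt_comp (hF : Continuous F) (hFpos : ∀ u ∈ Ioo a b, 0 < F u)
    (hmem : ∀ s, q s ∈ Ioo a b) (hq : ∀ s, HasDerivAt q (F (q s)) s) :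
    Tendsto q atBot (𝓝 a) := by
  have hrefl : Tendsto (fun s => -q (-s)) atTop (𝓝 (-a)) := by
    refine tendsto_atTop_of_hasDerivAt_comp (F := fun u => F (-u)) (a := -b)
      (hF.comp continuous_neg) (fun u hu => hFpos _ ⟨by linarith [hu.2], by linarith [hu.1]⟩)
      (fun s => ⟨neg_lt_neg (hmem _).2, neg_lt_neg (hmem _).1⟩) fun s => ?_
    exact ((hq (-s)).comp s (hasDerivAt_neg s)).neg.congr_deriv (by simp)
  simpa [Function.comp_def] using hrefl.neg.comp tendsto_neg_atBot_atTop

end Autonomous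

lemma range_eq_Ioo_of_tendsto {f : ℝ → ℝ} {a b : ℝ} (hf : Continuous f)
    (hmem : ∀ s, f s ∈ Ioo a b) (hbot : Tendsto f atBot (𝓝 a))
    (htop : Tendsto f atTop (𝓝 b)) : range f = Ioo a b := by
  refine (range_subset_iff.2 hmem).antisymm fun y hy => ?_
  exact mem_range_of_exists_le_of_exists_ge hf
    ((hbot.eventually (eventually_lt_nhds hy.1)).exists.imp fun _ => le_of_lt)
    ((htop.eventually (eventually_gt_nhds hy.2)).exists.imp fun _ => le_of_lt)

theorem stmt4_general (W : ℝ → ℝ) (a b : ℝ)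
    (hWc : Continuous W)
    (hWpos : ∀ u ∈ Set.Ioo a b, 0 < W u) (q₀ : ℝ → ℝ)
    (hq₀mem : ∀ s, q₀ s ∈ Set.Ioo a b)
    (hq₀ : ∀ s, HasDerivAt q₀ (Real.sqrt (W (q₀ s))) s) :
    StrictMono q₀ ∧ Set.range q₀ = Set.Ioo a b := by
  have hsqrt_pos : ∀ u ∈ Ioo a b, 0 < Real.sqrt (W u) := fun u hu =>
    Real.sqrt_pos.2 (hWpos u hu)
  refine ⟨strictMono_of_hasDerivAt_pos hq₀ fun s => hsqrt_pos _ (hq₀mem s), ?_⟩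
  exact range_eq_Ioo_of_tendsto (continuous_iff_continuousAt.2 fun s => (hq₀ s).continuousAt)
    hq₀mem (tendsto_atBot_of_hasDerivAt_comp hWc.sqrt hsqrt_pos hq₀mem hq₀)
    (tendsto_atTop_of_hasDerivAt_comp hWc.sqrt hsqrt_pos hq₀mem hq₀)

/-- The optimal profile `q₀ : ℝ → (a,b)` solving `q₀' = √(W ∘ q₀)` with
`q₀ 0 = (a+b)/2` is strictly increasing and a bijection from `ℝ` onto `(a,b)`. -/
theorem stmt4 (W : ℝ → ℝ) (a b : ℝ) (hab : a < b) (hWnn : ∀ u, 0 ≤ W u)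
    (hWc : Continuous W) (hWa : W a = 0) (hWb : W b = 0)
    (hWpos : ∀ u ∈ Set.Ioo a b, 0 < W u) (q₀ : ℝ → ℝ)
    (hq₀mem : ∀ s, q₀ s ∈ Set.Ioo a b)
    (hq₀ : ∀ s, HasDerivAt q₀ (Real.sqrt (W (q₀ s))) s)
    (hq₀0 : q₀ 0 = (a + b) / 2) :
    StrictMono q₀ ∧ Set.range q₀ = Set.Ioo a b :=
  stmt4_general W a b hWc hWpos q₀ hq₀mem hq₀
end

section
/- Let W : ℝ → [0,∞) be C² with consecutive zeros a < b, W > 0 on (a,b), and W''(a) > 0, W''(b) > 0. Let q₀ solve q₀' = √(W(q₀)), q₀(0) = (a+b)/2. Then there is a constant C > 0 such that b - q₀(s) ≤ C e^{-s/C} and q₀(s) - a ≤ C e^{s/C} for every s ∈ ℝ. -/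
/-!
Near a nondegenerate well `b` Taylor's theorem gives `W u ≥ c (u - b)²`, and compactness
extends this to `[q₀ 0, b]`, so `(b - q₀)' = -√(W q₀) ≤ -√c (b - q₀)` for `s ≥ 0`;
Grönwall's inequality then yields exponential decay of `b - q₀`. For `s ≤ 0` the trivial
bound `b - q₀ ≤ b - a` suffices. The well `a` is treated by the reflection `u ↦ -u`,
`s ↦ -s`.
-/

open Real Set Filter Topology

theorem taylorWithinEval_two_univ (f : ℝ → ℝ) (x₀ x : ℝ) :
    taylorWithinEval f 2 univ x₀ x =
      f x₀ + deriv f x₀ * (x - x₀) + iteratedDeriv 2 f x₀ / 2 * (x - x₀) ^ 2 := by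
  simp only [taylor_within_apply, Finset.sum_range_succ, Finset.sum_range_zero,
    iteratedDerivWithin_univ, iteratedDeriv_zero, iteratedDeriv_one, Nat.factorial_zero,
    Nat.factorial_one, Nat.factorial_two, smul_eq_mul]
  push_cast
  ring

theorem eventually_add_deriv_mul_add_sq_le {f : ℝ → ℝ} {x₀ : ℝ} (hf : ContDiff ℝ 2 f)
    (h2 : 0 < iteratedDeriv 2 f x₀) :
    ∀ᶠ x in 𝓝 x₀,
      f x₀ + deriv f x₀ * (x - x₀) + iteratedDeriv 2 f x₀ / 4 * (x - x₀) ^ 2 ≤ f x := by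
  have hlo := (taylor_isLittleO_univ (n := 2) (x₀ := x₀) hf).def
    (c := iteratedDeriv 2 f x₀ / 4) (by positivity)
  filter_upwards [hlo] with x hx
  rw [taylorWithinEval_two_univ, Real.norm_eq_abs, Real.norm_eq_abs, abs_pow, sq_abs] at hx
  linarith [(abs_le.mp hx).1]

theorem exists_mul_sq_le_on_Icc {f : ℝ → ℝ} {m b c : ℝ} (hf : ContinuousOn f (Icc m b))
    (hpos : ∀ u ∈ Ico m b, 0 < f u) (hc : 0 < c)
    (hnear : ∀ᶠ u in 𝓝 b, c * (u - b) ^ 2 ≤ f u) :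
    ∃ c' > 0, ∀ u ∈ Icc m b, c' * (u - b) ^ 2 ≤ f u := by
  obtain ⟨δ, hδ, hball⟩ := Metric.eventually_nhds_iff.mp hnear
  have hK : IsCompact (Icc m (b - δ)) := isCompact_Icc
  have hKsub : Icc m (b - δ) ⊆ Ico m b := fun u hu => ⟨hu.1, by linarith [hu.2]⟩
  have hne : ∀ u ∈ Icc m (b - δ), (u - b) ^ 2 ≠ 0 := fun u hu =>
    pow_ne_zero 2 (by linarith [hu.2])
  obtain ⟨ε, hε, hεle⟩ := hK.exists_forall_le' (f := fun u => f u / (u - b) ^ 2)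
    ((hf.mono (hKsub.trans Ico_subset_Icc_self)).div (by fun_prop) hne)
    (fun u hu => div_pos (hpos u (hKsub hu)) (lt_of_le_of_ne (sq_nonneg _) (hne u hu).symm))
  refine ⟨min c ε, lt_min hc hε, fun u hu => ?_⟩
  rcases lt_or_ge (b - δ) u with hu' | hu'
  · calc min c ε * (u - b) ^ 2 ≤ c * (u - b) ^ 2 := by gcongr; exact min_le_left _ _
      _ ≤ f u := hball (by rw [Real.dist_eq, abs_sub_lt_iff]; constructor <;> linarith [hu.2])
  · have hsq : 0 < (u - b) ^ 2 := lt_of_le_of_ne (sq_nonneg _) (hne u ⟨hu.1, hu'⟩).symm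
    calc min c ε * (u - b) ^ 2 ≤ ε * (u - b) ^ 2 := by gcongr; exact min_le_right _ _
      _ ≤ f u := (le_div_iff₀ hsq).mp (hεle u ⟨hu.1, hu'⟩)

theorem sub_le_mul_exp_of_hasDerivAt_sqrt {W q : ℝ → ℝ} {b c : ℝ}
    (hq : ∀ s, HasDerivAt q (√(W (q s))) s) (hqb : ∀ s, q s ≤ b)
    (hW : ∀ u ∈ Icc (q 0) b, c * (b - u) ≤ √(W u)) {s : ℝ} (hs : 0 ≤ s) :
    b - q s ≤ (b - q 0) * exp (-(c * s)) := by
  have hmono : Monotone q :=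
    monotone_of_deriv_nonneg (fun s => (hq s).differentiableAt)
      (fun s => (hq s).deriv ▸ Real.sqrt_nonneg _)
  have hgap : ∀ t, HasDerivAt (fun t => b - q t) (-√(W (q t))) t := fun t => (hq t).const_sub b
  have := le_gronwallBound_of_liminf_deriv_right_le (f := fun t => b - q t) (K := -c) (ε := 0)
    (a := 0) (b := s) (δ := b - q 0)
    (fun t _ => (hgap t).continuousAt.continuousWithinAt)
    (fun t _ _ hr => (hgap t).hasDerivWithinAt.liminf_right_slope_le hr) le_rfl
    (fun t ht => by linarith [hW (q t) ⟨hmono ht.1, hqb t⟩]) s ⟨hs, le_rfl⟩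
  simpa [gronwallBound_ε0] using this

theorem exists_sub_le_mul_exp_of_hasDerivAt_sqrt {W q : ℝ → ℝ} {b : ℝ}
    (hW : ContDiff ℝ 2 W) (hmin : IsLocalMin W b) (hWb : W b = 0) (hW'' : 0 < iteratedDeriv 2 W b)
    (hpos : ∀ u ∈ Ico (q 0) b, 0 < W u) (hq : ∀ s, HasDerivAt q (√(W (q s))) s)
    (hqb : ∀ s, q s ≤ b) :
    ∃ c > 0, ∀ s, 0 ≤ s → b - q s ≤ (b - q 0) * exp (-(c * s)) := by
  have hnear : ∀ᶠ u in 𝓝 b, iteratedDeriv 2 W b / 4 * (u - b) ^ 2 ≤ W u := by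
    simpa [hWb, hmin.deriv_eq_zero] using eventually_add_deriv_mul_add_sq_le hW hW''
  obtain ⟨c, hc, hsq⟩ := exists_mul_sq_le_on_Icc hW.continuous.continuousOn hpos
    (by positivity) hnear
  refine ⟨√c, Real.sqrt_pos.mpr hc, fun s hs => sub_le_mul_exp_of_hasDerivAt_sqrt hq hqb
    (fun u hu => ?_) hs⟩
  calc √c * (b - u) = √(c * (u - b) ^ 2) := by
        rw [Real.sqrt_mul hc.le, Real.sqrt_sq_eq_abs, abs_sub_comm,
          abs_of_nonneg (sub_nonneg.mpr hu.2)]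
    _ ≤ √(W u) := Real.sqrt_le_sqrt (hsq u hu)

theorem le_mul_exp_neg_div {x L c C s : ℝ} (hxL : x ≤ L)
    (hx : 0 ≤ s → x ≤ L * exp (-(c * s))) (hLC : L ≤ C) (hcC : 1 ≤ c * C) (hC : 0 < C) :
    x ≤ C * exp (-s / C) := by
  rcases le_or_gt 0 s with hs | hs
  · have hexp : -(c * s) ≤ -s / C := by
      rw [neg_div, neg_le_neg_iff, div_le_iff₀ hC]
      nlinarith
    calc x ≤ L * exp (-(c * s)) := hx hs
      _ ≤ C * exp (-s / C) := by gcongr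
  · have hexp : 1 ≤ exp (-s / C) := Real.one_le_exp (div_nonneg (by linarith) hC.le)
    nlinarith

theorem stmt5_general (W : ℝ → ℝ) (a b : ℝ) (hWnn : ∀ u, 0 ≤ W u)
    (hWC2 : ContDiff ℝ 2 W) (hWa : W a = 0) (hWb : W b = 0)
    (hWpos : ∀ u ∈ Set.Ioo a b, 0 < W u)
    (hW''a : 0 < iteratedDeriv 2 W a) (hW''b : 0 < iteratedDeriv 2 W b)
    (q₀ : ℝ → ℝ) (hq₀mem : ∀ s, q₀ s ∈ Set.Ioo a b)
    (hq₀ : ∀ s, HasDerivAt q₀ (Real.sqrt (W (q₀ s))) s) :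
    ∃ C > 0, ∀ s : ℝ,
      b - q₀ s ≤ C * Real.exp (-s / C) ∧ q₀ s - a ≤ C * Real.exp (s / C) := by
  obtain ⟨c₁, hc₁, hb⟩ := exists_sub_le_mul_exp_of_hasDerivAt_sqrt hWC2
    (Eventually.of_forall fun v => hWb ▸ hWnn v) hWb hW''b
    (fun u hu => hWpos u ⟨(hq₀mem 0).1.trans_le hu.1, hu.2⟩) hq₀
    (fun s => (hq₀mem s).2.le)
  -- the well `a` of `W` is the well `-a` of `u ↦ W (-u)`, approached by `s ↦ -q₀ (-s)`
  obtain ⟨c₂, hc₂, ha⟩ := exists_sub_le_mul_exp_of_hasDerivAt_sqrt (W := fun u => W (-u))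
    (q := fun s => -q₀ (-s)) (b := -a) (hWC2.comp contDiff_neg)
    (Eventually.of_forall fun v => by simpa [hWa] using hWnn (-v)) (by simpa)
    (by simpa [iteratedDeriv_comp_neg] using hW''a)
    (fun u hu => hWpos (-u) ⟨by linarith [hu.2], by linarith [hu.1, (hq₀mem (-0)).2]⟩)
    (fun s => by simpa using ((hq₀ (-s)).scomp s (hasDerivAt_neg s)).fun_neg)
    (fun s => by linarith [(hq₀mem (-s)).1])
  set C := max (b - a) (max c₁⁻¹ c₂⁻¹)
  have hC : 0 < C := (inv_pos.mpr hc₁).trans_le ((le_max_left _ _).trans (le_max_right _ _))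
  have hcC : ∀ c > 0, c⁻¹ ≤ C → 1 ≤ c * C := fun c hc h => by
    rw [← mul_inv_cancel₀ hc.ne']; gcongr
  refine ⟨C, hC, fun s => ⟨?_, ?_⟩⟩
  · refine le_mul_exp_neg_div (x := b - q₀ s) (L := b - a) (c := c₁)
      (by linarith [(hq₀mem s).1]) (fun hs => ?_) (le_max_left _ _)
      (hcC c₁ hc₁ ((le_max_left _ _).trans (le_max_right _ _))) hC
    have hL : b - q₀ 0 ≤ b - a := by linarith [(hq₀mem 0).1]
    exact (hb s hs).trans (mul_le_mul_of_nonneg_right hL (exp_pos _).le)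
  · have hbound := le_mul_exp_neg_div (x := q₀ s - a) (L := b - a) (c := c₂) (s := -s)
      (by linarith [(hq₀mem s).2]) (fun hs => ?_) (le_max_left _ _)
      (hcC c₂ hc₂ ((le_max_right _ _).trans (le_max_right _ _))) hC
    · simpa [neg_div] using hbound
    · have hL : -a - -q₀ (-0) ≤ b - a := by linarith [(hq₀mem (-0)).2]
      have := (ha (-s) hs).trans (mul_le_mul_of_nonneg_right hL (exp_pos _).le)
      simp only [neg_neg, mul_neg] at this ⊢
      linarith

/-- Exponential convergence of the optimal profile to the wells:
`b - q₀ s ≤ C e^{-s/C}` and `q₀ s - a ≤ C e^{s/C}` for some `C > 0`. -/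
theorem stmt5 (W : ℝ → ℝ) (a b : ℝ) (hab : a < b) (hWnn : ∀ u, 0 ≤ W u)
    (hWC2 : ContDiff ℝ 2 W) (hWa : W a = 0) (hWb : W b = 0)
    (hWpos : ∀ u ∈ Set.Ioo a b, 0 < W u)
    (hW''a : 0 < iteratedDeriv 2 W a) (hW''b : 0 < iteratedDeriv 2 W b)
    (q₀ : ℝ → ℝ) (hq₀mem : ∀ s, q₀ s ∈ Set.Ioo a b)
    (hq₀ : ∀ s, HasDerivAt q₀ (Real.sqrt (W (q₀ s))) s)
    (hq₀0 : q₀ 0 = (a + b) / 2) :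
    ∃ C > 0, ∀ s : ℝ,
      b - q₀ s ≤ C * Real.exp (-s / C) ∧ q₀ s - a ≤ C * Real.exp (s / C) :=
  stmt5_general W a b hWnn hWC2 hWa hWb hWpos hW''a hW''b q₀ hq₀mem hq₀
end

section
/- Let W : ℝ → [0,∞) be C² with consecutive zeros a < b, W > 0 on (a,b), W''(a) > 0 and W''(b) > 0, and let q₀ be the solution of q₀' = √(W(q₀)), q₀(0) = (a+b)/2. Then there is a constant C > 0 such that 0 < q₀'(s) ≤ C e^{-|s|/C} for every s ∈ ℝ. -/
/-!
Near each well, `W` is comparable to the squared distance to the well: Taylor's bound with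
`W a = W' a = 0` gives `W u ≤ K (u - a)²`, and `W'' a > 0` gives `m (u - a)² ≤ W u` nearby.
Positivity of `W` on the compact middle part glues these into
`λ min (u - a) (b - u) ≤ √(W u) ≤ L min (u - a) (b - u)` on `[a, b]`.
For `s ≥ 0` the profile lies above the midpoint, so the gap `g = b - q₀` satisfies
`g' = -√(W q₀) ≤ -λ g` and decays like `e^{-λ s}` by Grönwall; reflecting gives `s ≤ 0`.
Finally `q₀' = √(W q₀) ≤ L min (q₀ - a) (b - q₀)` inherits the exponential decay.
-/

open Set Filter Topology Real

theorem ConvexOn.tangent_line_le {S : Set ℝ} {g : ℝ → ℝ} {x y g' : ℝ} (hg : ConvexOn ℝ S g)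
    (hx : x ∈ S) (hy : y ∈ S) (hg' : HasDerivAt g g' x) : g x + g' * (y - x) ≤ g y := by
  rcases lt_trichotomy x y with hxy | rfl | hxy
  · have := hg.le_slope_of_hasDerivAt hx hy hxy hg'
    rw [slope_def_field, le_div_iff₀ (sub_pos.2 hxy)] at this
    linarith
  · simp
  · have := hg.slope_le_of_hasDerivAt hy hx hxy hg'
    rw [slope_def_field, div_le_iff₀ (sub_pos.2 hxy)] at this
    linarith

theorem quadratic_minorant_of_le_deriv2 {f f' f'' : ℝ → ℝ} (hf : ∀ u, HasDerivAt f (f' u) u)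
    (hf' : ∀ u, HasDerivAt f' (f'' u) u) {x y m : ℝ} (hm : ∀ u ∈ uIcc x y, m ≤ f'' u) :
    f x + f' x * (y - x) + m / 2 * (y - x) ^ 2 ≤ f y := by
  set g : ℝ → ℝ := fun u ↦ f u - m / 2 * (u - x) ^ 2
  have hg (u : ℝ) : HasDerivAt g (f' u - m * (u - x)) u := by
    have hsq := (((hasDerivAt_id' u).sub_const x).fun_pow 2).const_mul (m / 2)
    refine ((hf u).fun_sub hsq).congr_deriv ?_
    push_cast; ring
  have hg' (u : ℝ) : HasDerivAt (fun u ↦ f' u - m * (u - x)) (f'' u - m) u := by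
    refine ((hf' u).fun_sub (((hasDerivAt_id' u).sub_const x).const_mul m)).congr_deriv ?_
    ring
  have hconv : ConvexOn ℝ (uIcc x y) g :=
    convexOn_of_hasDerivWithinAt2_nonneg (convex_uIcc x y)
      (fun u _ ↦ (hg u).continuousAt.continuousWithinAt)
      (fun u _ ↦ (hg u).hasDerivWithinAt) (fun u _ ↦ (hg' u).hasDerivWithinAt)
      (fun u hu ↦ sub_nonneg.2 (hm u (interior_subset hu)))
  have := hconv.tangent_line_le left_mem_uIcc right_mem_uIcc (hg x)
  simp only [g, sub_self] at this
  linarith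

theorem quadratic_majorant_of_deriv2_le {f f' f'' : ℝ → ℝ} (hf : ∀ u, HasDerivAt f (f' u) u)
    (hf' : ∀ u, HasDerivAt f' (f'' u) u) {x y M : ℝ} (hM : ∀ u ∈ uIcc x y, f'' u ≤ M) :
    f y ≤ f x + f' x * (y - x) + M / 2 * (y - x) ^ 2 := by
  have := quadratic_minorant_of_le_deriv2 (fun u ↦ (hf u).neg) (fun u ↦ (hf' u).neg)
    (m := -M) fun u hu ↦ neg_le_neg (hM u hu)
  simp only [Pi.neg_apply] at this
  linarith

theorem eventually_quadratic_minorant {f f' f'' : ℝ → ℝ} (hf : ∀ u, HasDerivAt f (f' u) u)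
    (hf' : ∀ u, HasDerivAt f' (f'' u) u) {x : ℝ} (hcont : ContinuousAt f'' x)
    (hpos : 0 < f'' x) :
    ∀ᶠ u in 𝓝 x, f x + f' x * (u - x) + f'' x / 4 * (u - x) ^ 2 ≤ f u := by
  have hnear : ∀ᶠ v in 𝓝 x, f'' x / 2 < f'' v :=
    hcont.eventually (lt_mem_nhds (half_lt_self hpos))
  obtain ⟨l, r, hx, hlr⟩ := mem_nhds_iff_exists_Ioo_subset.1 hnear
  filter_upwards [Ioo_mem_nhds hx.1 hx.2] with u hu
  have := quadratic_minorant_of_le_deriv2 hf hf' (m := f'' x / 2)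
    fun v hv ↦ (hlr (ordConnected_Ioo.uIcc_subset hx hu hv)).le
  linarith

theorem exists_mul_min_sq_le {f : ℝ → ℝ} {a b ma mb : ℝ} (hab : a < b)
    (hf : ContinuousOn f (Icc a b)) (hpos : ∀ u ∈ Ioo a b, 0 < f u) (hma : 0 < ma) (hmb : 0 < mb)
    (ha : ∀ᶠ u in 𝓝 a, ma * (u - a) ^ 2 ≤ f u) (hb : ∀ᶠ u in 𝓝 b, mb * (u - b) ^ 2 ≤ f u) :
    ∃ c > 0, ∀ u ∈ Icc a b, c * min (u - a) (b - u) ^ 2 ≤ f u := by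
  obtain ⟨a', ha', hnear_a⟩ := mem_nhdsGE_iff_exists_Ico_subset.1 (nhdsWithin_le_nhds ha)
  obtain ⟨b', hb', hnear_b⟩ := mem_nhdsLE_iff_exists_Ioc_subset.1 (nhdsWithin_le_nhds hb)
  obtain ⟨δ, hδ, hmid⟩ := isCompact_Icc.exists_forall_le' (hf.mono (Icc_subset_Icc ha'.le hb'.le))
    fun u hu ↦ hpos u ⟨ha'.trans_le hu.1, hu.2.trans_lt hb'⟩
  have hba : 0 < (b - a) ^ 2 := by nlinarith
  refine ⟨min (min ma mb) (δ / (b - a) ^ 2), by positivity, fun u hu ↦ ?_⟩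
  have hmin : 0 ≤ min (u - a) (b - u) := le_min (by linarith [hu.1]) (by linarith [hu.2])
  rcases lt_or_ge u a' with hua' | hua'
  · calc min (min ma mb) (δ / (b - a) ^ 2) * min (u - a) (b - u) ^ 2
        ≤ ma * (u - a) ^ 2 := by
          gcongr
          · exact (min_le_left _ _).trans (min_le_left _ _)
          · exact min_le_left _ _
      _ ≤ f u := hnear_a ⟨hu.1, hua'⟩
  rcases lt_or_ge b' u with hub' | hub'
  · calc min (min ma mb) (δ / (b - a) ^ 2) * min (u - a) (b - u) ^ 2
        ≤ mb * (b - u) ^ 2 := by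
          gcongr
          · exact (min_le_left _ _).trans (min_le_right _ _)
          · exact min_le_right _ _
      _ = mb * (u - b) ^ 2 := by ring
      _ ≤ f u := hnear_b ⟨hub', hu.2⟩
  calc min (min ma mb) (δ / (b - a) ^ 2) * min (u - a) (b - u) ^ 2
      ≤ δ / (b - a) ^ 2 * (b - a) ^ 2 := by
        gcongr
        · exact min_le_right _ _
        · exact (min_le_left _ _).trans (by linarith [hu.2])
    _ = δ := div_mul_cancel₀ δ hba.ne'
    _ ≤ f u := hmid u ⟨hua', hub'⟩

theorem deriv_eq_zero_of_forall_nonneg {f : ℝ → ℝ} (hf : ∀ u, 0 ≤ f u) {x : ℝ} (hx : f x = 0) :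
    deriv f x = 0 :=
  IsLocalMin.deriv_eq_zero (Eventually.of_forall fun u ↦ hx ▸ hf u)

theorem hasDerivAt_deriv_of_contDiff_two {f : ℝ → ℝ} (hf : ContDiff ℝ 2 f) (u : ℝ) :
    HasDerivAt (deriv f) (iteratedDeriv 2 f u) u := by
  have := (hf.differentiable_iteratedDeriv 1 (by norm_num) u).hasDerivAt
  rw [iteratedDeriv_one] at this
  rwa [iteratedDeriv_succ, iteratedDeriv_one]

theorem exists_sqrt_le_mul_min {W : ℝ → ℝ} {a b : ℝ} (hWnn : ∀ u, 0 ≤ W u)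
    (hWC2 : ContDiff ℝ 2 W) (hWa : W a = 0) (hWb : W b = 0) :
    ∃ L ≥ 0, ∀ u ∈ Icc a b, √(W u) ≤ L * min (u - a) (b - u) := by
  have hW (u : ℝ) : HasDerivAt W (deriv W u) u := (hWC2.differentiable two_ne_zero u).hasDerivAt
  obtain ⟨M, hM⟩ := isCompact_Icc.bddAbove_image (f := iteratedDeriv 2 W) (K := Icc a b)
    (hWC2.continuous_iteratedDeriv 2 le_rfl).continuousOn
  have hmajorant {x u : ℝ} (hx : x ∈ Icc a b) (hu : u ∈ Icc a b) (hWx : W x = 0) :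
      W u ≤ M / 2 * (u - x) ^ 2 := by
    have := quadratic_majorant_of_deriv2_le hW (hasDerivAt_deriv_of_contDiff_two hWC2)
      fun v hv ↦ hM (mem_image_of_mem _ (uIcc_subset_Icc hx hu hv))
    simpa only [hWx, deriv_eq_zero_of_forall_nonneg hWnn hWx, zero_mul, zero_add] using this
  refine ⟨√(M / 2), sqrt_nonneg _, fun u hu ↦ ?_⟩
  have hmin : 0 ≤ min (u - a) (b - u) := le_min (by linarith [hu.1]) (by linarith [hu.2])
  have hab : a ≤ b := hu.1.trans hu.2
  have hW_le : W u ≤ M / 2 * min (u - a) (b - u) ^ 2 := by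
    rcases min_cases (u - a) (b - u) with ⟨hmin_eq, -⟩ | ⟨hmin_eq, -⟩ <;> rw [hmin_eq]
    · exact hmajorant (left_mem_Icc.2 hab) hu hWa
    · rw [← neg_sub, neg_sq]
      exact hmajorant (right_mem_Icc.2 hab) hu hWb
  calc √(W u) ≤ √(M / 2 * min (u - a) (b - u) ^ 2) := sqrt_le_sqrt hW_le
    _ = √(M / 2) * min (u - a) (b - u) := by rw [sqrt_mul' _ (sq_nonneg _), sqrt_sq hmin]

theorem exists_mul_min_le_sqrt {W : ℝ → ℝ} {a b : ℝ} (hab : a < b) (hWnn : ∀ u, 0 ≤ W u)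
    (hWC2 : ContDiff ℝ 2 W) (hWa : W a = 0) (hWb : W b = 0)
    (hWpos : ∀ u ∈ Ioo a b, 0 < W u)
    (hW''a : 0 < iteratedDeriv 2 W a) (hW''b : 0 < iteratedDeriv 2 W b) :
    ∃ lam > 0, ∀ u ∈ Icc a b, lam * min (u - a) (b - u) ≤ √(W u) := by
  have hW (u : ℝ) : HasDerivAt W (deriv W u) u := (hWC2.differentiable two_ne_zero u).hasDerivAt
  have hminorant {x : ℝ} (hWx : W x = 0) (hW''x : 0 < iteratedDeriv 2 W x) :
      ∀ᶠ u in 𝓝 x, iteratedDeriv 2 W x / 4 * (u - x) ^ 2 ≤ W u := by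
    have := eventually_quadratic_minorant hW (hasDerivAt_deriv_of_contDiff_two hWC2)
      (hWC2.continuous_iteratedDeriv 2 le_rfl).continuousAt hW''x
    simpa only [hWx, deriv_eq_zero_of_forall_nonneg hWnn hWx, zero_mul, zero_add] using this
  obtain ⟨c, hc, hlow⟩ := exists_mul_min_sq_le hab hWC2.continuous.continuousOn hWpos
    (by positivity) (by positivity) (hminorant hWa hW''a) (hminorant hWb hW''b)
  refine ⟨√c, sqrt_pos.2 hc, fun u hu ↦ ?_⟩
  have hmin : 0 ≤ min (u - a) (b - u) := le_min (by linarith [hu.1]) (by linarith [hu.2])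
  calc √c * min (u - a) (b - u) = √(c * min (u - a) (b - u) ^ 2) := by
        rw [sqrt_mul' _ (sq_nonneg _), sqrt_sq hmin]
    _ ≤ √(W u) := sqrt_le_sqrt (hlow u hu)

theorem sub_le_mul_exp_of_hasDerivAt {F q : ℝ → ℝ} {b lam : ℝ}
    (hq : ∀ s, HasDerivAt q (F (q s)) s) (hF0 : ∀ u, 0 ≤ F u) (hqb : ∀ s, q s ≤ b)
    (hF : ∀ u ∈ Icc (q 0) b, lam * (b - u) ≤ F u) {s : ℝ} (hs : 0 ≤ s) :
    b - q s ≤ (b - q 0) * exp (-lam * s) := by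
  have hmono : Monotone q := monotone_of_hasDerivAt_nonneg hq fun s ↦ hF0 _
  have hgap (t : ℝ) : HasDerivAt (fun t ↦ b - q t) (-F (q t)) t := (hq t).const_sub b
  have := le_gronwallBound_of_liminf_deriv_right_le (δ := b - q 0) (K := -lam) (ε := 0)
    (fun t _ ↦ (hgap t).continuousAt.continuousWithinAt)
    (fun t _ _ hr ↦ (hgap t).hasDerivWithinAt.liminf_right_slope_le hr) le_rfl
    (fun t ht ↦ by linarith [hF (q t) ⟨hmono ht.1, hqb t⟩]) s ⟨hs, le_rfl⟩
  rwa [gronwallBound_ε0, sub_zero] at this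

theorem sub_le_mul_exp_of_hasDerivAt_of_nonpos {F q : ℝ → ℝ} {a lam : ℝ}
    (hq : ∀ s, HasDerivAt q (F (q s)) s) (hF0 : ∀ u, 0 ≤ F u) (hqa : ∀ s, a ≤ q s)
    (hF : ∀ u ∈ Icc a (q 0), lam * (u - a) ≤ F u) {s : ℝ} (hs : s ≤ 0) :
    q s - a ≤ (q 0 - a) * exp (lam * s) := by
  have hrefl (t : ℝ) : HasDerivAt (fun t ↦ -q (-t)) (F (-(-q (-t)))) t :=
    ((hq (-t)).comp t (hasDerivAt_neg' t)).neg.congr_deriv (by simp)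
  have := sub_le_mul_exp_of_hasDerivAt (F := fun u ↦ F (-u)) (b := -a) (lam := lam) hrefl
    (fun u ↦ hF0 _) (fun t ↦ neg_le_neg (hqa (-t)))
    (fun u hu ↦ by
      have := hF (-u) ⟨le_neg.1 hu.2, by simpa using neg_le.1 hu.1⟩
      linarith) (neg_nonneg.2 hs)
  simp only [neg_neg, neg_zero, neg_mul_neg, sub_neg_eq_add] at this
  linarith

theorem min_sub_le_mul_exp_neg_abs {F q : ℝ → ℝ} {a b lam : ℝ}
    (hq : ∀ s, HasDerivAt q (F (q s)) s) (hF0 : ∀ u, 0 ≤ F u) (hmem : ∀ s, q s ∈ Icc a b)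
    (hq0 : q 0 = (a + b) / 2) (hF : ∀ u ∈ Icc a b, lam * min (u - a) (b - u) ≤ F u) (s : ℝ) :
    min (q s - a) (b - q s) ≤ (b - a) / 2 * exp (-lam * |s|) := by
  have ha0 := (hmem 0).1
  have hb0 := (hmem 0).2
  rcases le_total 0 s with hs | hs
  · have := sub_le_mul_exp_of_hasDerivAt hq hF0 (fun t ↦ (hmem t).2)
      (fun u hu ↦ by
        have := hF u ⟨by linarith [hu.1], hu.2⟩
        rwa [min_eq_right (by linarith [hu.1])] at this) hs
    rw [abs_of_nonneg hs]
    rw [hq0] at this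
    linarith [min_le_right (q s - a) (b - q s)]
  · have := sub_le_mul_exp_of_hasDerivAt_of_nonpos hq hF0 (fun t ↦ (hmem t).1)
      (fun u hu ↦ by
        have := hF u ⟨hu.1, by linarith [hu.2]⟩
        rwa [min_eq_left (by linarith [hu.2])] at this) hs
    rw [abs_of_nonpos hs, mul_neg, neg_mul, neg_neg]
    rw [hq0] at this
    linarith [min_le_left (q s - a) (b - q s)]

theorem exists_le_mul_exp_neg_abs_div {f : ℝ → ℝ} {A lam : ℝ} (hlam : 0 < lam)
    (hf : ∀ s, f s ≤ A * exp (-lam * |s|)) : ∃ C > 0, ∀ s, f s ≤ C * exp (-|s| / C) := by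
  set C := max (1 / lam) A
  have hC : 0 < C := lt_max_of_lt_left (by positivity)
  have hCinv : 1 / C ≤ lam := by
    rw [div_le_iff₀ hC]
    have := (div_le_iff₀ hlam).1 (le_max_left (1 / lam) A)
    linarith
  refine ⟨C, hC, fun s ↦ (hf s).trans ?_⟩
  gcongr
  · exact le_max_right _ _
  · calc -lam * |s| ≤ -(1 / C) * |s| := by gcongr
      _ = -|s| / C := by ring

/-- Exponential decay of the derivative of the optimal profile:
there is `C > 0` with `0 < q₀' s ≤ C e^{-|s|/C}` for all `s`. -/
theorem stmt6 (W : ℝ → ℝ) (a b : ℝ) (hab : a < b) (hWnn : ∀ u, 0 ≤ W u)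
    (hWC2 : ContDiff ℝ 2 W) (hWa : W a = 0) (hWb : W b = 0)
    (hWpos : ∀ u ∈ Set.Ioo a b, 0 < W u)
    (hW''a : 0 < iteratedDeriv 2 W a) (hW''b : 0 < iteratedDeriv 2 W b)
    (q₀ : ℝ → ℝ) (hq₀mem : ∀ s, q₀ s ∈ Set.Ioo a b)
    (hq₀ : ∀ s, HasDerivAt q₀ (Real.sqrt (W (q₀ s))) s)
    (hq₀0 : q₀ 0 = (a + b) / 2) :
    ∃ C > 0, ∀ s : ℝ,
      0 < deriv q₀ s ∧ deriv q₀ s ≤ C * Real.exp (-|s| / C) := by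
  obtain ⟨L, hL, hupper⟩ := exists_sqrt_le_mul_min hWnn hWC2 hWa hWb
  obtain ⟨lam, hlam, hlower⟩ := exists_mul_min_le_sqrt hab hWnn hWC2 hWa hWb hWpos hW''a hW''b
  have hmem (s : ℝ) : q₀ s ∈ Icc a b := Ioo_subset_Icc_self (hq₀mem s)
  have hderiv (s : ℝ) : deriv q₀ s = √(W (q₀ s)) := (hq₀ s).deriv
  obtain ⟨C, hC, hdecay⟩ := exists_le_mul_exp_neg_abs_div (f := deriv q₀)
    (A := L * ((b - a) / 2)) hlam fun s ↦ by
      have hwell := min_sub_le_mul_exp_neg_abs hq₀ (fun _ ↦ sqrt_nonneg _) hmem hq₀0 hlower s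
      calc deriv q₀ s ≤ L * min (q₀ s - a) (b - q₀ s) := (hderiv s).trans_le (hupper _ (hmem s))
        _ ≤ L * ((b - a) / 2 * exp (-lam * |s|)) := by gcongr
        _ = L * ((b - a) / 2) * exp (-lam * |s|) := by ring
  exact ⟨C, hC, fun s ↦ ⟨(hderiv s).symm ▸ sqrt_pos.2 (hWpos _ (hq₀mem s)), hdecay s⟩⟩
end

section
/- If q is a solution of q'(s) = √(W(q(s))) with q(s₀) = γ ∈ (a,b), where q₀ is the solution with q₀(0) = (a+b)/2 and q₀ : ℝ → (a,b) is bijective, then q(s) = q₀(s - s₀ + q₀⁻¹(γ)) for all s ∈ ℝ. -/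
/-!
Away from the wells `a`, `b` the vector field `u ↦ √(W u)` is locally Lipschitz: `W` is, and `√`
is smooth on `(0, ∞)`. Both `q` and the translate `s ↦ q₀ (s - s₀ + q₀⁻¹ γ)` solve the autonomous
equation inside `(a, b)` and agree at `s₀`, so by local (Picard–Lindelöf) uniqueness the set where
they agree is open; it is also closed and nonempty, hence all of `ℝ`.
-/

open Set Metric Filter Topology

lemma locallyLipschitzOn_of_lipschitzOnWith_ball_inter {α β : Type*} [PseudoMetricSpace α]
    [PseudoEMetricSpace β] {f : α → β} {s : Set α}
    (hf : ∀ x ∈ s, ∃ ε > 0, ∃ K, LipschitzOnWith K f (ball x ε ∩ s)) :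
    LocallyLipschitzOn s f := by
  intro x hx
  obtain ⟨ε, hε, K, hK⟩ := hf x hx
  exact ⟨K, _, mem_nhdsWithin.mpr ⟨ball x ε, isOpen_ball, mem_ball_self hε, subset_rfl⟩, hK⟩

lemma LocallyLipschitzOn.comp {α β γ : Type*} [PseudoEMetricSpace α] [PseudoEMetricSpace β]
    [PseudoEMetricSpace γ] {f : β → γ} {g : α → β} {s : Set α} {t : Set β}
    (hf : LocallyLipschitzOn t f) (hg : LocallyLipschitzOn s g) (hst : MapsTo g s t) :
    LocallyLipschitzOn s (f ∘ g) := by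
  intro x hx
  obtain ⟨Kg, u, hu, hgu⟩ := hg hx
  obtain ⟨Kf, v, hv, hfv⟩ := hf (hst hx)
  have hgv : g ⁻¹' v ∈ 𝓝[s] x :=
    tendsto_nhdsWithin_iff.mpr ⟨hg.continuousOn x hx, eventually_mem_nhdsWithin.mono hst⟩ hv
  exact ⟨Kf * Kg, u ∩ g ⁻¹' v, inter_mem hu hgv,
    hfv.comp (hgu.mono inter_subset_left) fun _ hy ↦ hy.2⟩

lemma Real.locallyLipschitzOn_sqrt : LocallyLipschitzOn (Ioi 0) Real.sqrt :=
  ContDiffOn.locallyLipschitzOn (convex_Ioi 0) fun _ hx ↦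
    (Real.contDiffAt_sqrt (ne_of_gt hx)).contDiffWithinAt

theorem ODE_solution_eq_of_locallyLipschitzOn {E : Type*} [NormedAddCommGroup E]
    [NormedSpace ℝ E] {v : E → E} {U : Set E} (hv : LocallyLipschitzOn U v) {f g : ℝ → E}
    (hf : ∀ t, HasDerivAt f (v (f t)) t) (hg : ∀ t, HasDerivAt g (v (g t)) t)
    (hfU : ∀ t, f t ∈ U) (hgU : ∀ t, g t ∈ U) {t₀ : ℝ} (heq : f t₀ = g t₀) : f = g := by
  have tendsto_nhdsWithin_of_mem {h : ℝ → E} (hh : ∀ t, HasDerivAt h (v (h t)) t)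
      (hhU : ∀ t, h t ∈ U) (t : ℝ) : Tendsto h (𝓝 t) (𝓝[U] (h t)) :=
    tendsto_nhdsWithin_iff.mpr ⟨(hh t).continuousAt, .of_forall hhU⟩
  have hopen : IsOpen {t | f t = g t} := by
    refine isOpen_iff_mem_nhds.mpr fun t (ht : f t = g t) ↦ ?_
    obtain ⟨K, T, hT, hvT⟩ := hv (hfU t)
    have hfT : ∀ᶠ s in 𝓝 t, f s ∈ T := tendsto_nhdsWithin_of_mem hf hfU t hT
    have hgT : ∀ᶠ s in 𝓝 t, g s ∈ T := tendsto_nhdsWithin_of_mem hg hgU t (ht ▸ hT)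
    exact ODE_solution_unique_of_eventually (v := fun _ ↦ v) (s := fun _ ↦ T)
      (.of_forall fun _ ↦ hvT) (hfT.mono fun s hs ↦ ⟨hf s, hs⟩)
      (hgT.mono fun s hs ↦ ⟨hg s, hs⟩) ht
  have hclosed : IsClosed {t | f t = g t} :=
    isClosed_eq (continuous_iff_continuousAt.mpr fun t ↦ (hf t).continuousAt)
      (continuous_iff_continuousAt.mpr fun t ↦ (hg t).continuousAt)
  have huniv := IsClopen.eq_univ ⟨hclosed, hopen⟩ ⟨t₀, heq⟩
  exact funext fun t ↦ (huniv ▸ mem_univ t : t ∈ {t | f t = g t})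

theorem stmt7_general (W : ℝ → ℝ) (a b : ℝ) (hWpos : ∀ u ∈ Set.Ioo a b, 0 < W u)
    (hWlip : ∀ u ∈ Set.Ioo a b, ∃ ε > 0, ∃ K : NNReal,
      LipschitzOnWith K W (Metric.ball u ε ∩ Set.Ioo a b))
    (q₀ : ℝ → ℝ) (hq₀range : Set.range q₀ = Set.Ioo a b)
    (hq₀ : ∀ s, HasDerivAt q₀ (Real.sqrt (W (q₀ s))) s)
    (q : ℝ → ℝ) (s₀ γ : ℝ) (hγ : γ ∈ Set.Ioo a b)
    (hqmem : ∀ s, q s ∈ Set.Ioo a b)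
    (hq : ∀ s, HasDerivAt q (Real.sqrt (W (q s))) s) (hqs₀ : q s₀ = γ) :
    ∀ s, q s = q₀ (s - s₀ + Function.invFun q₀ γ) := by
  set c := Function.invFun q₀ γ
  have hc : q₀ c = γ := Function.invFun_eq (hq₀range.symm ▸ hγ : γ ∈ range q₀)
  have hv : LocallyLipschitzOn (Ioo a b) (fun u ↦ Real.sqrt (W u)) :=
    Real.locallyLipschitzOn_sqrt.comp
      (locallyLipschitzOn_of_lipschitzOnWith_ball_inter hWlip) hWpos
  have htrans : ∀ s, HasDerivAt (fun s ↦ q₀ (s - s₀ + c)) (Real.sqrt (W (q₀ (s - s₀ + c)))) s :=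
    fun s ↦ by simpa only [add_sub_assoc', add_comm_sub] using (hq₀ _).comp_add_const s (c - s₀)
  exact congrFun (ODE_solution_eq_of_locallyLipschitzOn hv hq htrans hqmem
    (fun _ ↦ hq₀range ▸ mem_range_self _) (t₀ := s₀) (by simp [hc, hqs₀]))

/-- Solutions of `q' = √(W ∘ q)` with datum `q s₀ = γ ∈ (a,b)` are translations of
the optimal profile: `q s = q₀ (s - s₀ + q₀⁻¹ γ)` for all `s`. -/
theorem stmt7 (W : ℝ → ℝ) (a b : ℝ) (hab : a < b) (hWnn : ∀ u, 0 ≤ W u)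
    (hWa : W a = 0) (hWb : W b = 0) (hWpos : ∀ u ∈ Set.Ioo a b, 0 < W u)
    (hWlip : ∀ u ∈ Set.Ioo a b, ∃ ε > 0, ∃ K : NNReal,
      LipschitzOnWith K W (Metric.ball u ε ∩ Set.Ioo a b))
    (q₀ : ℝ → ℝ) (hq₀mem : ∀ s, q₀ s ∈ Set.Ioo a b)
    (hq₀mono : StrictMono q₀) (hq₀range : Set.range q₀ = Set.Ioo a b)
    (hq₀ : ∀ s, HasDerivAt q₀ (Real.sqrt (W (q₀ s))) s)
    (hq₀0 : q₀ 0 = (a + b) / 2)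
    (q : ℝ → ℝ) (s₀ γ : ℝ) (hγ : γ ∈ Set.Ioo a b)
    (hqmem : ∀ s, q s ∈ Set.Ioo a b)
    (hq : ∀ s, HasDerivAt q (Real.sqrt (W (q s))) s) (hqs₀ : q s₀ = γ) :
    ∀ s, q s = q₀ (s - s₀ + Function.invFun q₀ γ) :=
  stmt7_general W a b hWpos hWlip q₀ hq₀range hq₀ q s₀ γ hγ hqmem hq hqs₀
end

section
/- Let W : ℝ → [0,∞) be C² with consecutive zeros a < b, W > 0 on (a,b), W''(a) > 0 and W''(b) > 0, and let q₀ : ℝ → (a,b) be the optimal profile solving q₀' = √(W(q₀)). Then ∫_{-∞}^{+∞} (W'(q₀(s)))² ds = ∫_a^b (W'(ψ))²/√(W(ψ)) dψ, and this quantity is finite; in particular W'∘q₀ belongs to L²(ℝ). -/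
/-!
A nonnegative `C²` function satisfies Glaeser's inequality `W'(x)² ≤ C W(x)` on compact sets:
expand `W` to second order at `x - W'(x)/M`, where `M` bounds `|W'|` and `W''`, and use `W ≥ 0`
there. Hence `W'²/√W ≤ C √W` is integrable on `[a, b]`. The substitution `ψ = q₀ s`, whose
Jacobian `q₀' = √(W ∘ q₀)` cancels the denominator, turns `∫_a^b W'²/√W` into `∫ (W' ∘ q₀)²`.
-/

open MeasureTheory intervalIntegral Set

theorem image_le_of_iteratedDeriv_two_le {f : ℝ → ℝ} {x y M : ℝ} (hf : ContDiff ℝ 2 f)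
    (hM : ∀ z ∈ uIcc x y, iteratedDeriv 2 f z ≤ M) :
    f y ≤ f x + deriv f x * (y - x) + M * (y - x) ^ 2 / 2 := by
  rcases eq_or_ne x y with rfl | hxy
  · simp
  obtain ⟨z, hz, hrem⟩ :=
    taylor_mean_remainder_lagrange_iteratedDeriv (n := 1) hxy hf.contDiffOn
  have hderiv : derivWithin f (uIcc x y) x = deriv f x :=
    ((hf.differentiable two_ne_zero) x).derivWithin ((uniqueDiffOn_uIcc hxy) x left_mem_uIcc)
  rw [taylorWithinEval_succ, taylor_within_zero_eval, iteratedDerivWithin_one, hderiv] at hrem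
  norm_num [Nat.factorial] at hrem
  nlinarith [hM z (uIoo_subset_uIcc_self hz), sq_nonneg (y - x)]

theorem deriv_sq_le_of_nonneg {f : ℝ → ℝ} {x M : ℝ} (hf : ContDiff ℝ 2 f) (hM : 0 < M)
    (hnn : ∀ y ∈ Icc (x - 1) (x + 1), 0 ≤ f y) (hf' : |deriv f x| ≤ M)
    (hf'' : ∀ y ∈ Icc (x - 1) (x + 1), iteratedDeriv 2 f y ≤ M) :
    deriv f x ^ 2 ≤ 2 * M * f x := by
  set y := x - deriv f x / M
  have hy : y ∈ Icc (x - 1) (x + 1) := by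
    have : |deriv f x / M| ≤ 1 := by rw [abs_div, abs_of_pos hM, div_le_one hM]; exact hf'
    constructor <;> linarith [abs_le.mp this]
  have hsub : uIcc x y ⊆ Icc (x - 1) (x + 1) :=
    uIcc_subset_Icc ⟨by linarith, by linarith⟩ hy
  have htaylor := image_le_of_iteratedDeriv_two_le hf fun z hz => hf'' z (hsub hz)
  have hfy := hnn y hy
  have hquad : deriv f x * (y - x) + M * (y - x) ^ 2 / 2 = -(deriv f x ^ 2 / (2 * M)) := by
    simp only [y]; field_simp; ring
  rw [← div_le_iff₀' (by positivity)]
  linarith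

theorem exists_deriv_sq_le_mul_of_nonneg {f : ℝ → ℝ} (hf : ContDiff ℝ 2 f) (hnn : ∀ y, 0 ≤ f y)
    (a b : ℝ) : ∃ C, ∀ x ∈ Icc a b, deriv f x ^ 2 ≤ C * f x := by
  obtain ⟨C₁, hC₁⟩ := (isCompact_Icc (a := a) (b := b)).exists_bound_of_continuousOn
    (hf.continuous_deriv one_le_two).continuousOn
  obtain ⟨C₂, hC₂⟩ := (isCompact_Icc (a := a - 1) (b := b + 1)).exists_bound_of_continuousOn
    (hf.continuous_iteratedDeriv 2 le_rfl).continuousOn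
  set M := max 1 (max C₁ C₂)
  refine ⟨2 * M, fun x hx => deriv_sq_le_of_nonneg hf (by positivity) (fun y _ => hnn y) ?_ ?_⟩
  · exact (hC₁ x hx).trans (le_max_of_le_right (le_max_left _ _))
  · intro y hy
    have hy' : y ∈ Icc (a - 1) (b + 1) := ⟨by linarith [hx.1, hy.1], by linarith [hx.2, hy.2]⟩
    exact (le_abs_self _).trans <| (hC₂ y hy').trans (le_max_of_le_right (le_max_right _ _))

theorem integrableOn_Icc_sq_deriv_div_sqrt {f : ℝ → ℝ} (hf : ContDiff ℝ 2 f)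
    (hnn : ∀ y, 0 ≤ f y) (a b : ℝ) :
    IntegrableOn (fun x => deriv f x ^ 2 / √(f x)) (Icc a b) := by
  obtain ⟨C, hC⟩ := exists_deriv_sq_le_mul_of_nonneg hf hnn a b
  have hcont_f := hf.continuous
  have hcont_f' := hf.continuous_deriv one_le_two
  refine Integrable.mono' (g := fun x => C * √(f x)) (by fun_prop : Continuous _).integrableOn_Icc
    (by fun_prop : Measurable _).aestronglyMeasurable.restrict ?_
  refine (ae_restrict_iff' measurableSet_Icc).2 (ae_of_all _ fun x hx => ?_)
  rw [Real.norm_of_nonneg (by positivity)]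
  rcases (hnn x).eq_or_lt with h0 | hpos
  · simp [← h0]
  · rw [div_le_iff₀ (Real.sqrt_pos.2 hpos), mul_assoc, Real.mul_self_sqrt hpos.le]
    exact hC x hx

theorem stmt9_general (W : ℝ → ℝ) (a b : ℝ) (hab : a < b) (hWnn : ∀ u, 0 ≤ W u)
    (hWC2 : ContDiff ℝ 2 W)
    (hWpos : ∀ u ∈ Set.Ioo a b, 0 < W u)
    (q₀ : ℝ → ℝ) (hq₀mem : ∀ s, q₀ s ∈ Set.Ioo a b)
    (hq₀mono : StrictMono q₀) (hq₀range : Set.range q₀ = Set.Ioo a b)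
    (hq₀ : ∀ s, HasDerivAt q₀ (Real.sqrt (W (q₀ s))) s) :
    (∫ s : ℝ, (deriv W (q₀ s)) ^ 2 = ∫ ψ in a..b, (deriv W ψ) ^ 2 / Real.sqrt (W ψ)) ∧
    IntervalIntegrable (fun ψ => (deriv W ψ) ^ 2 / Real.sqrt (W ψ)) volume a b ∧
    MemLp (fun s => deriv W (q₀ s)) 2 (volume : Measure ℝ) := by
  set g : ℝ → ℝ := fun ψ => deriv W ψ ^ 2 / √(W ψ)
  have hg : IntegrableOn g (Ioo a b) :=
    (integrableOn_Icc_sq_deriv_div_sqrt hWC2 hWnn a b).mono_set Ioo_subset_Icc_self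
  have hq₀' : ∀ s ∈ univ, HasDerivWithinAt q₀ (√(W (q₀ s))) univ s :=
    fun s _ => (hq₀ s).hasDerivWithinAt
  have hjac : (fun s => |√(W (q₀ s))| • g (q₀ s)) = fun s => deriv W (q₀ s) ^ 2 := by
    funext s
    have hpos : 0 < √(W (q₀ s)) := Real.sqrt_pos.2 (hWpos _ (hq₀mem s))
    rw [abs_of_pos hpos, smul_eq_mul, mul_div_cancel₀ _ hpos.ne']
  have hchange := integral_image_eq_integral_abs_deriv_smul MeasurableSet.univ hq₀'
    hq₀mono.injective.injOn g
  have hint := integrableOn_image_iff_integrableOn_abs_deriv_smul MeasurableSet.univ hq₀'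
    hq₀mono.injective.injOn g
  rw [image_univ, hq₀range, Measure.restrict_univ, hjac] at hchange
  rw [image_univ, hq₀range, hjac, integrableOn_univ] at hint
  refine ⟨?_, (intervalIntegrable_iff_integrableOn_Ioo_of_le hab.le).2 hg, ?_⟩
  · rw [← hchange, integral_of_le hab.le, integral_Ioc_eq_integral_Ioo]
  · have hmeas : AEStronglyMeasurable (fun s => deriv W (q₀ s)) volume :=
      ((hWC2.continuous_deriv one_le_two).comp
        (continuous_iff_continuousAt.2 fun s => (hq₀ s).continuousAt)).aestronglyMeasurable
    exact (memLp_two_iff_integrable_sq hmeas).2 (hint.1 hg)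

/-- `∫ℝ (W'(q₀ s))² ds = ∫_a^b (W' ψ)²/√(W ψ) dψ`, this quantity is finite,
and in particular `W' ∘ q₀ ∈ L²(ℝ)`. -/
theorem stmt9 (W : ℝ → ℝ) (a b : ℝ) (hab : a < b) (hWnn : ∀ u, 0 ≤ W u)
    (hWC2 : ContDiff ℝ 2 W) (hWa : W a = 0) (hWb : W b = 0)
    (hWpos : ∀ u ∈ Set.Ioo a b, 0 < W u)
    (hW''a : 0 < iteratedDeriv 2 W a) (hW''b : 0 < iteratedDeriv 2 W b)
    (q₀ : ℝ → ℝ) (hq₀mem : ∀ s, q₀ s ∈ Set.Ioo a b)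
    (hq₀mono : StrictMono q₀) (hq₀range : Set.range q₀ = Set.Ioo a b)
    (hq₀ : ∀ s, HasDerivAt q₀ (Real.sqrt (W (q₀ s))) s) :
    (∫ s : ℝ, (deriv W (q₀ s)) ^ 2 = ∫ ψ in a..b, (deriv W ψ) ^ 2 / Real.sqrt (W ψ)) ∧
    IntervalIntegrable (fun ψ => (deriv W ψ) ^ 2 / Real.sqrt (W ψ)) volume a b ∧
    MemLp (fun s => deriv W (q₀ s)) 2 (volume : Measure ℝ) :=
  stmt9_general W a b hab hWnn hWC2 hWpos q₀ hq₀mem hq₀mono hq₀range hq₀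
end

section
/- Let W : ℝ → [0,∞) be C² with W(a) = W(b) = 0 and W > 0 on (a,b), and let q₀ be the optimal profile (strictly increasing solution of q' = √(W(q)) with q₀(0) = (a+b)/2). Suppose ψ : ℝ → ℝ is continuous, C¹ on the open set Ω = {s : W(ψ(s)) > 0}, satisfies ψ'(s)² = W(ψ(s)) for every s ∈ Ω, and ψ(0) = γ ∈ (a,b). Then either ψ(s) = q₀(s + q₀⁻¹(γ)) for all s, or ψ(s) = q₀(-s + q₀⁻¹(γ)) for all s. -/
/-!
On the connected component `I` of `Ω = {W ∘ ψ > 0}` containing `0`, the image of `ψ` is an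
interval through `γ` avoiding the zeros `a`, `b` of `W`, so it lies in `(a,b)`. There `ψ'` is
continuous and never zero, so `ψ' = σ √(W ∘ ψ)` for a fixed sign `σ`, and `q₀⁻¹ ∘ ψ - σ s`
has derivative zero: `ψ s = q₀ (σ s + q₀⁻¹ γ)` on `I`. By continuity this formula persists on
the closure of `I`, where it keeps `W ∘ ψ` positive; hence `I` is closed as well as open, so
`I = ℝ`.
-/

open Set Function

theorem IsPreconnected.subset_Ioo_of_notMem {α : Type*} [LinearOrder α] [TopologicalSpace α]
    [OrderClosedTopology α] {S : Set α} (hS : IsPreconnected S) {a b γ : α} (hγS : γ ∈ S)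
    (hγ : γ ∈ Ioo a b) (ha : a ∉ S) (hb : b ∉ S) : S ⊆ Ioo a b := fun _ hx =>
  ⟨lt_of_not_ge fun h => ha (hS.ordConnected.out hx hγS ⟨h, hγ.1.le⟩),
    lt_of_not_ge fun h => hb (hS.ordConnected.out hγS hx ⟨hγ.2.le, h⟩)⟩

theorem connectedComponentIn_eq_univ_of_closure_subset {X : Type*} [TopologicalSpace X]
    [PreconnectedSpace X] [LocallyConnectedSpace X] {Ω : Set X} {x : X} (hΩ : IsOpen Ω) (hx : x ∈ Ω)
    (h : closure (connectedComponentIn Ω x) ⊆ Ω) : connectedComponentIn Ω x = univ := by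
  have hclosed : IsClosed (connectedComponentIn Ω x) :=
    isClosed_of_closure_subset <|
      isPreconnected_connectedComponentIn.closure.subset_connectedComponentIn
        (subset_closure (mem_connectedComponentIn hx)) h
  exact IsClopen.eq_univ ⟨hclosed, hΩ.connectedComponentIn⟩ ⟨x, mem_connectedComponentIn hx⟩

theorem StrictMono.hasDerivAt_invFun {q : ℝ → ℝ} (hq : StrictMono q) (hopen : IsOpen (range q))
    {s q' : ℝ} (hd : HasDerivAt q q' s) (hq' : q' ≠ 0) :
    HasDerivAt (invFun q) q'⁻¹ (q s) := by
  have hnhds : range q ∈ nhds (q s) := hopen.mem_nhds (mem_range_self s)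
  have hmono : MonotoneOn (invFun q) (range q) := by
    rintro _ ⟨x, rfl⟩ _ ⟨y, rfl⟩ hxy
    rw [leftInverse_invFun hq.injective x, leftInverse_invFun hq.injective y]
    exact hq.le_iff_le.mp hxy
  have himage : invFun q '' range q = univ :=
    eq_univ_of_forall fun t => ⟨q t, mem_range_self t, leftInverse_invFun hq.injective t⟩
  have hcont : ContinuousAt (invFun q) (q s) :=
    continuousAt_of_monotoneOn_of_image_mem_nhds hmono hnhds (himage ▸ Filter.univ_mem)
  refine HasDerivAt.of_local_left_inverse hcont ?_ hq'
    (Filter.eventually_of_mem hnhds fun u hu => invFun_eq hu)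
  rwa [leftInverse_invFun hq.injective s]

theorem eqOn_comp_mul_add_of_hasDerivAt {f q ψ : ℝ → ℝ} {I : Set ℝ} {σ t₀ : ℝ}
    (hq : StrictMono q) (hopen : IsOpen (range q))
    (hqd : ∀ s, HasDerivAt q (f (q s)) s) (hf : ∀ s, f (q s) ≠ 0)
    (hI : IsOpen I) (hIc : IsPreconnected I) (ht₀ : t₀ ∈ I)
    (hψI : MapsTo ψ I (range q)) (hψ : ∀ s ∈ I, HasDerivAt ψ (σ * f (ψ s)) s) :
    EqOn ψ (fun s => q (σ * (s - t₀) + invFun q (ψ t₀))) I := by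
  have hG : ∀ s ∈ I, HasDerivAt (fun t => invFun q (ψ t) - σ * t) 0 s := by
    intro s hs
    obtain ⟨x, hx⟩ := hψI hs
    have hinv := hq.hasDerivAt_invFun hopen (hqd x) (hf x)
    have hfx := hf x
    rw [hx] at hinv hfx
    have hd := (hinv.comp s (hψ s hs)).sub ((hasDerivAt_id s).const_mul σ)
    rwa [mul_left_comm, inv_mul_cancel₀ hfx, mul_one, sub_self] at hd
  intro s hs
  have hGs : invFun q (ψ s) - σ * s = invFun q (ψ t₀) - σ * t₀ :=
    hI.is_const_of_deriv_eq_zero hIc (fun t ht => (hG t ht).differentiableAt.differentiableWithinAt)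
      (fun t ht => (hG t ht).deriv) hs ht₀
  rw [← invFun_eq (hψI hs)]
  congr 1
  linear_combination hGs

theorem stmt12_general (W : ℝ → ℝ) (a b : ℝ)
    (hWC2 : ContDiff ℝ 2 W) (hWa : W a = 0) (hWb : W b = 0)
    (hWpos : ∀ u ∈ Set.Ioo a b, 0 < W u)
    (q₀ : ℝ → ℝ)
    (hq₀mono : StrictMono q₀) (hq₀range : Set.range q₀ = Set.Ioo a b)
    (hq₀ : ∀ s, HasDerivAt q₀ (Real.sqrt (W (q₀ s))) s)
    (ψ : ℝ → ℝ) (hψc : Continuous ψ)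
    (hψdiff : ∀ s ∈ {s : ℝ | 0 < W (ψ s)}, DifferentiableAt ℝ ψ s)
    (hψC1 : ContinuousOn (deriv ψ) {s : ℝ | 0 < W (ψ s)})
    (hψode : ∀ s ∈ {s : ℝ | 0 < W (ψ s)}, (deriv ψ s) ^ 2 = W (ψ s))
    (γ : ℝ) (hγ : γ ∈ Set.Ioo a b) (hψ0 : ψ 0 = γ) :
    (∀ s, ψ s = q₀ (s + Function.invFun q₀ γ)) ∨
    (∀ s, ψ s = q₀ (-s + Function.invFun q₀ γ)) := by
  set Ω : Set ℝ := {s | 0 < W (ψ s)}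
  have hWψ : Continuous fun s => W (ψ s) := hWC2.continuous.comp hψc
  have hΩ : IsOpen Ω := isOpen_lt continuous_const hWψ
  have h0 : (0 : ℝ) ∈ Ω := show 0 < W (ψ 0) from hψ0 ▸ hWpos γ hγ
  set I := connectedComponentIn Ω 0
  have hIc : IsPreconnected I := isPreconnected_connectedComponentIn
  have hIΩ : I ⊆ Ω := connectedComponentIn_subset Ω 0
  have hψI : MapsTo ψ I (Ioo a b) := fun s hs =>
    (hIc.image ψ hψc.continuousOn).subset_Ioo_of_notMem ⟨0, mem_connectedComponentIn h0, hψ0⟩ hγ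
      (fun ⟨t, ht, hta⟩ => (show 0 < W (ψ t) from hIΩ ht).ne' (by rw [hta, hWa]))
      (fun ⟨t, ht, htb⟩ => (show 0 < W (ψ t) from hIΩ ht).ne' (by rw [htb, hWb])) ⟨s, hs, rfl⟩
  obtain ⟨σ, hσ, hderiv⟩ : ∃ σ : ℝ, (σ = 1 ∨ σ = -1) ∧
      ∀ s ∈ I, HasDerivAt ψ (σ * √(W (ψ s))) s := by
    rcases hIc.eq_or_eq_neg_of_sq_eq (hψC1.mono hIΩ) hWψ.sqrt.continuousOn
      (fun s hs => by simp [hψode s (hIΩ hs), Real.sq_sqrt (hIΩ hs).le])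
      (fun hs => (Real.sqrt_pos.mpr (hIΩ hs)).ne') with h | h
    · exact ⟨1, .inl rfl, fun s hs => by
        simpa only [one_mul, h hs] using (hψdiff s (hIΩ hs)).hasDerivAt⟩
    · exact ⟨-1, .inr rfl, fun s hs => by
        simpa only [neg_one_mul, h hs, Pi.neg_apply] using (hψdiff s (hIΩ hs)).hasDerivAt⟩
  have hWq₀ : ∀ s, 0 < W (q₀ s) := fun s => hWpos _ (hq₀range ▸ mem_range_self s)
  have hsol := eqOn_comp_mul_add_of_hasDerivAt (f := fun u => √(W u)) hq₀mono
    (hq₀range ▸ isOpen_Ioo) hq₀ (fun s => (Real.sqrt_pos.mpr (hWq₀ s)).ne')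
    hΩ.connectedComponentIn hIc (mem_connectedComponentIn h0) (hq₀range ▸ hψI) hderiv
  have hq₀c : Continuous q₀ := continuous_iff_continuousAt.mpr fun s => (hq₀ s).continuousAt
  have huniv : I = univ := connectedComponentIn_eq_univ_of_closure_subset hΩ h0 fun s hs =>
    show 0 < W (ψ s) by rw [hsol.closure hψc (by fun_prop) hs]; exact hWq₀ _
  have hall : ∀ s, ψ s = q₀ (σ * s + invFun q₀ γ) := fun s => by
    simpa only [sub_zero, hψ0] using hsol (show s ∈ I from huniv ▸ mem_univ s)
  rcases hσ with rfl | rfl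
  · exact .inl fun s => by simpa only [one_mul] using hall s
  · exact .inr fun s => by simpa only [neg_one_mul] using hall s

/-- Characterization lemma: if `ψ` is continuous, `C¹` on `Ω = {W(ψ) > 0}` with
`(ψ')² = W ∘ ψ` there, and `ψ 0 = γ ∈ (a,b)`, then `ψ` is a (possibly reflected)
translation of the optimal profile. -/
theorem stmt12 (W : ℝ → ℝ) (a b : ℝ) (hab : a < b) (hWnn : ∀ u, 0 ≤ W u)
    (hWC2 : ContDiff ℝ 2 W) (hWa : W a = 0) (hWb : W b = 0)
    (hWpos : ∀ u ∈ Set.Ioo a b, 0 < W u)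
    (q₀ : ℝ → ℝ) (hq₀mem : ∀ s, q₀ s ∈ Set.Ioo a b)
    (hq₀mono : StrictMono q₀) (hq₀range : Set.range q₀ = Set.Ioo a b)
    (hq₀ : ∀ s, HasDerivAt q₀ (Real.sqrt (W (q₀ s))) s)
    (hq₀0 : q₀ 0 = (a + b) / 2)
    (ψ : ℝ → ℝ) (hψc : Continuous ψ)
    (hψdiff : ∀ s ∈ {s : ℝ | 0 < W (ψ s)}, DifferentiableAt ℝ ψ s)
    (hψC1 : ContinuousOn (deriv ψ) {s : ℝ | 0 < W (ψ s)})
    (hψode : ∀ s ∈ {s : ℝ | 0 < W (ψ s)}, (deriv ψ s) ^ 2 = W (ψ s))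
    (γ : ℝ) (hγ : γ ∈ Set.Ioo a b) (hψ0 : ψ 0 = γ) :
    (∀ s, ψ s = q₀ (s + Function.invFun q₀ γ)) ∨
    (∀ s, ψ s = q₀ (-s + Function.invFun q₀ γ)) :=
  stmt12_general W a b hWC2 hWa hWb hWpos q₀ hq₀mono hq₀range hq₀ ψ hψc hψdiff hψC1 hψode γ hγ hψ0
end

section
/- Let q₀ be the optimal profile with exponentially decaying derivative (i.e. there is C > 0 with 0 < q₀'(s) ≤ C e^{-|s|/C}), let σ = 2∫_a^b √W = 2∫_{-∞}^{∞} (q₀')² ds, let Σ ⊂ ℝⁿ be a compact C^∞ hypersurface, and let H : Σ → ℝ be continuous. Define, for η ∈ C¹(ℝ²), F(η) = ∫_{-∞}^{∞} ∫_Σ [∂_s η(H(y),s) + 2 q₀'(s)² H(y)]² dℋ^{n-1}(y) ds. Then inf { F(η) : η ∈ C²_c(ℝ²) } = 0. -/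
/-!
Put `g = 2 q₀'²` and take `η(t, s) = -ζ(t) φ(s)` with `ζ(t) = t` on the range of `H`; then
`F(η) = ‖φ' - g‖²_{L²(ℝ)} · ∫_Σ H²`. The derivatives of `C_c^∞` functions are exactly the
`C_c^∞` functions of integral zero, and these are dense in `L²(ℝ)`: from a smooth approximation `ψ`
of `g` subtract `(∫ ψ) χ`, where `χ` is a bump of integral one and arbitrarily small `L²` norm
(a wide, flat bump). The exponential decay of `q₀'` puts `g` in `L²`, so `F(η)` can be made
arbitrarily small.
-/

open MeasureTheory Real Set Metric Function
open scoped ContDiff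

lemma integrable_exp_neg_mul_abs {b : ℝ} (hb : 0 < b) :
    Integrable fun x : ℝ => exp (-b * |x|) := by
  have hIoi : IntegrableOn (fun x : ℝ => exp (-b * |x|)) (Ioi 0) :=
    (exp_neg_integrableOn_Ioi 0 hb).congr_fun (fun x hx => by rw [abs_of_pos hx])
      measurableSet_Ioi
  rw [← integrableOn_univ, ← Iio_union_Ici (a := (0 : ℝ)), integrableOn_union,
    integrableOn_Ici_iff_integrableOn_Ioi]
  refine ⟨?_, hIoi⟩
  rw [← (Measure.measurePreserving_neg (volume : Measure ℝ)).integrableOn_comp_preimage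
    (Homeomorph.neg ℝ).measurableEmbedding]
  simpa only [comp_def, abs_neg, neg_preimage, neg_Iio, neg_zero] using hIoi

lemma memLp_two_of_abs_le_mul_exp {f : ℝ → ℝ} (hf : AEStronglyMeasurable f volume) {b c : ℝ}
    (hb : 0 < b) (h : ∀ x, |f x| ≤ c * exp (-b * |x|)) : MemLp f 2 volume := by
  refine (memLp_two_iff_integrable_sq hf).2 <|
    ((integrable_exp_neg_mul_abs (by positivity : 0 < 2 * b)).const_mul (c ^ 2)).mono'
      (hf.pow 2) (.of_forall fun x => ?_)
  calc ‖f x ^ 2‖ = |f x| ^ 2 := by simp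
    _ ≤ (c * exp (-b * |x|)) ^ 2 := pow_le_pow_left₀ (abs_nonneg _) (h x) 2
    _ = c ^ 2 * exp (-(2 * b) * |x|) := by
      rw [mul_pow, ← exp_nat_mul]; ring_nf

lemma lpNorm_two_sq {α : Type*} [MeasurableSpace α] {μ : Measure α} {f : α → ℝ}
    (hf : AEStronglyMeasurable f μ) : lpNorm f 2 μ ^ 2 = ∫ x, f x ^ 2 ∂μ := by
  have h0 : 0 ≤ ∫ x, ‖f x‖ ^ (2 : ℝ) ∂μ := by positivity
  rw [lpNorm_eq_integral_norm_rpow_toReal two_ne_zero ENNReal.ofNat_ne_top hf,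
    ENNReal.toReal_ofNat, ← rpow_natCast, ← rpow_mul h0]
  norm_num

lemma exists_integral_eq_one_lpNorm_two_lt {ε : ℝ} (hε : 0 < ε) :
    ∃ χ : ℝ → ℝ, ContDiff ℝ ∞ χ ∧ HasCompactSupport χ ∧ ∫ x, χ x = 1 ∧
      lpNorm χ 2 volume < ε := by
  -- with `L = ε⁻²`, a normalized bump of inner radius `L` is bounded by `1 / (2 L) = ε ^ 2 / 2`
  let B : ContDiffBump (0 : ℝ) := ⟨(ε ^ 2)⁻¹, 2 * (ε ^ 2)⁻¹, by positivity, by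
    linarith [inv_pos.2 (pow_pos hε 2)]⟩
  have hχ := B.continuous_normed (μ := volume)
  have hχle : ∀ x, B.normed volume x ≤ ε ^ 2 / 2 := fun x => by
    have := B.normed_le_div_measure_closedBall_rIn (μ := volume) x
    rwa [volume_real_closedBall B.rIn_pos.le, show B.rIn = (ε ^ 2)⁻¹ from rfl,
      show 2 * (ε ^ 2)⁻¹ = (ε ^ 2 / 2)⁻¹ by field_simp, one_div, inv_inv] at this
  refine ⟨B.normed volume, B.contDiff_normed, B.hasCompactSupport_normed, B.integral_normed, ?_⟩
  have hsq : ∫ x, B.normed volume x ^ 2 ≤ ε ^ 2 / 2 := calc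
    ∫ x, B.normed volume x ^ 2 ≤ ∫ x, ε ^ 2 / 2 * B.normed volume x :=
      integral_mono (hχ.memLp_of_hasCompactSupport B.hasCompactSupport_normed).integrable_sq
        (B.integrable_normed.const_mul _)
        fun x => by nlinarith [hχle x, B.nonneg_normed (μ := volume) x]
    _ = ε ^ 2 / 2 := by rw [integral_const_mul, B.integral_normed, mul_one]
  rw [← pow_lt_pow_iff_left₀ lpNorm_nonneg hε.le two_ne_zero,
    lpNorm_two_sq hχ.aestronglyMeasurable]
  linarith [pow_pos hε 2]

lemma MeasureTheory.MemLp.exists_integral_eq_zero_lpNorm_sub_lt {g : ℝ → ℝ}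
    (hg : MemLp g 2 volume) {ε : ℝ} (hε : 0 < ε) :
    ∃ f : ℝ → ℝ, ContDiff ℝ ∞ f ∧ HasCompactSupport f ∧ ∫ x, f x = 0 ∧
      lpNorm (f - g) 2 volume < ε := by
  obtain ⟨ψ, hψc, hψ, hψg⟩ :=
    hg.exist_eLpNorm_sub_le ENNReal.ofNat_ne_top one_le_two (half_pos hε)
  set c := ∫ x, ψ x
  obtain ⟨χ, hχ, hχc, hχ1, hχε⟩ :=
    exists_integral_eq_one_lpNorm_two_lt (ε := ε / 2 / (|c| + 1)) (by positivity)
  have hψ2 : MemLp ψ 2 volume := hψ.continuous.memLp_of_hasCompactSupport hψc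
  refine ⟨ψ - c • χ, hψ.sub (hχ.const_smul c), hψc.sub hχc.smul_left, ?_, ?_⟩
  · simp only [Pi.sub_apply, Pi.smul_apply, smul_eq_mul]
    rw [integral_sub (hψ.continuous.integrable_of_hasCompactSupport hψc)
      ((hχ.continuous.integrable_of_hasCompactSupport hχc).const_mul c), integral_const_mul, hχ1,
      mul_one, sub_self]
  have hψg' : lpNorm (ψ - g) 2 volume ≤ ε / 2 := by
    rw [lpNorm_sub_comm, ← toReal_eLpNorm (hg.1.sub hψ2.1)]
    exact ENNReal.toReal_le_of_le_ofReal (half_pos hε).le hψg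
  have hcχ : |c| * lpNorm χ 2 volume < ε / 2 := calc
    |c| * lpNorm χ 2 volume ≤ (|c| + 1) * lpNorm χ 2 volume :=
      mul_le_mul_of_nonneg_right (by linarith) lpNorm_nonneg
    _ < (|c| + 1) * (ε / 2 / (|c| + 1)) := by gcongr
    _ = ε / 2 := by field_simp
  calc lpNorm (ψ - c • χ - g) 2 volume = lpNorm ((ψ - g) - c • χ) 2 volume := by
        congr 1; abel
    _ ≤ lpNorm (ψ - g) 2 volume + lpNorm (c • χ) 2 volume :=
        lpNorm_sub_le (hψ2.sub hg) one_le_two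
    _ < ε := by
        rw [lpNorm_const_smul]
        simp only [coe_nnnorm, norm_eq_abs]
        linarith

lemma HasCompactSupport.exists_deriv_eq_of_integral_eq_zero {f : ℝ → ℝ}
    (hfc : HasCompactSupport f) (hf : Continuous f) (h0 : ∫ x, f x = 0) :
    ∃ φ : ℝ → ℝ, HasCompactSupport φ ∧ Differentiable ℝ φ ∧ deriv φ = f := by
  obtain ⟨R, hR⟩ := hfc.isCompact.isBounded.subset_ball 0
  have hsupp : support f ⊆ Ioo (-R) R := by
    rw [Real.ball_eq_Ioo, zero_sub, zero_add] at hR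
    exact (subset_tsupport f).trans hR
  refine ⟨fun x => ∫ t in (-R)..x, f t, HasCompactSupport.intro (isCompact_Icc (a := -R) (b := R))
    fun x hx => ?_, fun x => (hf.integral_hasStrictDerivAt _ x).hasDerivAt.differentiableAt,
    funext (hf.deriv_integral f (-R))⟩
  rcases not_and_or.1 hx with hx | hx
  · refine intervalIntegral.integral_zero_ae (.of_forall fun t ht => ?_)
    rw [uIoc_of_ge (by linarith)] at ht
    exact notMem_support.1 fun h => by linarith [(hsupp h).1, ht.2]
  · rw [intervalIntegral.integral_eq_integral_of_support_subset
      (hsupp.trans (Ioo_subset_Ioc_self.trans (Ioc_subset_Ioc_right (by linarith)))), h0]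

lemma MeasureTheory.MemLp.exists_integral_sq_deriv_sub_lt {g : ℝ → ℝ} (hg : MemLp g 2 volume)
    {ε : ℝ} (hε : 0 < ε) :
    ∃ φ : ℝ → ℝ, ContDiff ℝ ∞ φ ∧ HasCompactSupport φ ∧ ∫ s, (deriv φ s - g s) ^ 2 < ε := by
  obtain ⟨f, hf, hfc, hf0, hfg⟩ := hg.exists_integral_eq_zero_lpNorm_sub_lt (sqrt_pos.2 hε)
  obtain ⟨φ, hφc, hφ, rfl⟩ := hfc.exists_deriv_eq_of_integral_eq_zero hf.continuous hf0
  refine ⟨φ, contDiff_infty_iff_deriv.2 ⟨hφ, hf⟩, hφc, ?_⟩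
  have hsq := lpNorm_two_sq (hf.continuous.aestronglyMeasurable.sub hg.1)
  simp only [Pi.sub_apply] at hsq
  rw [← hsq, ← sq_sqrt hε.le]
  exact pow_lt_pow_left₀ hfg lpNorm_nonneg two_ne_zero

lemma exists_contDiff_hasCompactSupport_eq_self (K : ℝ) :
    ∃ ζ : ℝ → ℝ, ContDiff ℝ ∞ ζ ∧ HasCompactSupport ζ ∧ ∀ t, |t| ≤ K → ζ t = t := by
  let θ : ContDiffBump (0 : ℝ) := ⟨|K| + 1, |K| + 2, by positivity, by linarith⟩
  refine ⟨fun t => t * θ t, contDiff_id.mul θ.contDiff, θ.hasCompactSupport.mul_left,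
    fun t ht => ?_⟩
  show t * θ t = t
  rw [θ.one_of_mem_closedBall (mem_closedBall_zero_iff.2 ?_), mul_one]
  show |t| ≤ |K| + 1
  linarith [le_abs_self K]

lemma HasCompactSupport.mul_prod {α β R : Type*} [TopologicalSpace α] [TopologicalSpace β]
    [MulZeroClass R] {f : α → R} {g : β → R} (hf : HasCompactSupport f)
    (hg : HasCompactSupport g) : HasCompactSupport fun p : α × β => f p.1 * g p.2 := by
  refine (hf.prod hg).of_isClosed_subset isClosed_closure <|
    closure_minimal (fun p hp => ?_) ((isClosed_tsupport f).prod (isClosed_tsupport g))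
  exact ⟨subset_tsupport _ (left_ne_zero_of_mul hp), subset_tsupport _ (right_ne_zero_of_mul hp)⟩

lemma integral_integral_sq_deriv_add_mul_eq {X : Type*} [MeasurableSpace X] (μ : Measure X)
    {S : Set X} (hS : MeasurableSet S) {H : X → ℝ} {K : ℝ} (hK : ∀ y ∈ S, |H y| ≤ K)
    {ζ φ : ℝ → ℝ} (hζ : ∀ t, |t| ≤ K → ζ t = t) (hφ : Differentiable ℝ φ) (g : ℝ → ℝ) :
    ∫ s, ∫ y in S, (deriv (fun s' => -(ζ (H y) * φ s')) s + g s * H y) ^ 2 ∂μ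
      = (∫ s, (deriv φ s - g s) ^ 2) * ∫ y in S, H y ^ 2 ∂μ := by
  have hpt : ∀ s, ∀ y ∈ S, (deriv (fun s' => -(ζ (H y) * φ s')) s + g s * H y) ^ 2
      = (deriv φ s - g s) ^ 2 * H y ^ 2 := fun s y hy => by
    have hd : HasDerivAt (fun s' => -(ζ (H y) * φ s')) (-(ζ (H y) * deriv φ s)) s :=
      ((hφ s).hasDerivAt.const_mul _).neg
    rw [hd.deriv, hζ _ (hK y hy)]
    ring
  calc ∫ s, ∫ y in S, (deriv (fun s' => -(ζ (H y) * φ s')) s + g s * H y) ^ 2 ∂μ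
      = ∫ s, (deriv φ s - g s) ^ 2 * ∫ y in S, H y ^ 2 ∂μ := by
        congr 1 with s
        rw [setIntegral_congr_fun hS (hpt s), integral_const_mul]
    _ = _ := integral_mul_const _ _

theorem stmt14_general (n : ℕ) (q₀ : ℝ → ℝ) (C : ℝ)
    (hCpos : 0 < C)
    (hq₀' : ∀ s, 0 < deriv q₀ s ∧ deriv q₀ s ≤ C * Real.exp (-|s| / C))
    (S : Set (EuclideanSpace ℝ (Fin n)))
    (hSm : MeasurableSet S)
    (H : EuclideanSpace ℝ (Fin n) → ℝ)
    (hHb : ∃ K, ∀ y ∈ S, |H y| ≤ K) :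
    sInf { x : ℝ | ∃ η : ℝ × ℝ → ℝ, ContDiff ℝ 2 η ∧ HasCompactSupport η ∧
      x = ∫ s : ℝ, ∫ y in S,
        (deriv (fun s' => η (H y, s')) s + 2 * (deriv q₀ s) ^ 2 * H y) ^ 2
          ∂(μH[(n : ℝ) - 1]) } = 0 := by
  obtain ⟨K, hK⟩ := hHb
  have hg : MemLp (fun s => 2 * deriv q₀ s ^ 2) 2 volume := by
    refine memLp_two_of_abs_le_mul_exp
      (((measurable_deriv q₀).pow_const 2).const_mul 2).aestronglyMeasurable
      (b := 2 / C) (c := 2 * C ^ 2) (by positivity) fun s => ?_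
    obtain ⟨hpos, hdecay⟩ := hq₀' s
    calc |2 * deriv q₀ s ^ 2| = 2 * deriv q₀ s ^ 2 := abs_of_nonneg (by positivity)
      _ ≤ 2 * (C * exp (-|s| / C)) ^ 2 := by gcongr
      _ = 2 * C ^ 2 * exp (-(2 / C) * |s|) := by
        rw [mul_pow, ← exp_nat_mul]; ring_nf
  obtain ⟨ζ, hζ, hζc, hζK⟩ := exists_contDiff_hasCompactSupport_eq_self K
  set IH := ∫ y in S, H y ^ 2 ∂μH[(n : ℝ) - 1]
  have hIH : 0 ≤ IH := integral_nonneg fun y => sq_nonneg _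
  refine csInf_eq_of_forall_ge_of_forall_gt_exists_lt ⟨_, 0, contDiff_const, .zero, rfl⟩
    (fun x ⟨η, _, _, hx⟩ => hx ▸ integral_nonneg fun s => integral_nonneg fun y => sq_nonneg _)
    fun w hw => ?_
  obtain ⟨φ, hφ, hφc, hφg⟩ := hg.exists_integral_sq_deriv_sub_lt (ε := w / (IH + 1))
    (by positivity)
  refine ⟨_, ⟨fun p => -(ζ p.1 * φ p.2),
    ((hζ.comp contDiff_fst).mul (hφ.comp contDiff_snd)).neg.of_le ENat.LEInfty.out,
    (hζc.mul_prod hφc).neg, rfl⟩, ?_⟩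
  rw [integral_integral_sq_deriv_add_mul_eq _ hSm hK hζK (hφ.differentiable (by norm_num))]
  calc (∫ s, (deriv φ s - 2 * deriv q₀ s ^ 2) ^ 2) * IH ≤ w / (IH + 1) * IH := by gcongr
    _ < w := by rw [div_mul_eq_mul_div, div_lt_iff₀ (by positivity)]; nlinarith

/-- Lemma 3.4: `inf { F(η) : η ∈ C²_c(ℝ²) } = 0`, where
`F(η) = ∫_ℝ ∫_Σ [∂_s η(H y, s) + 2 q₀'(s)² H(y)]² dℋ^{n-1}(y) ds`. -/
theorem stmt14 (n : ℕ) (hn : 1 ≤ n) (W q₀ : ℝ → ℝ) (a b C σ : ℝ) (hab : a < b)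
    (hCpos : 0 < C) (hWnn : ∀ u, 0 ≤ W u)
    (hq₀mem : ∀ s, q₀ s ∈ Set.Ioo a b)
    (hq₀ : ∀ s, HasDerivAt q₀ (Real.sqrt (W (q₀ s))) s)
    (hq₀0 : q₀ 0 = (a + b) / 2)
    (hq₀' : ∀ s, 0 < deriv q₀ s ∧ deriv q₀ s ≤ C * Real.exp (-|s| / C))
    (hσ : σ = 2 * ∫ s : ℝ, (deriv q₀ s) ^ 2)
    (S : Set (EuclideanSpace ℝ (Fin n))) (hSc : IsCompact S)
    (hSm : MeasurableSet S) (hSfin : μH[(n : ℝ) - 1] S < ⊤)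
    (H : EuclideanSpace ℝ (Fin n) → ℝ) (hH : ContinuousOn H S)
    (hHb : ∃ K, ∀ y ∈ S, |H y| ≤ K) :
    sInf { x : ℝ | ∃ η : ℝ × ℝ → ℝ, ContDiff ℝ 2 η ∧ HasCompactSupport η ∧
      x = ∫ s : ℝ, ∫ y in S,
        (deriv (fun s' => η (H y, s')) s + 2 * (deriv q₀ s) ^ 2 * H y) ^ 2
          ∂(μH[(n : ℝ) - 1]) } = 0 :=
  stmt14_general n q₀ C hCpos hq₀' S hSm H hHb
end

section
/- Let q_ε(t,s) solve ∂_s q_ε = √(W(q_ε) - ε η(t,s)) with q_ε(t,0) = (a+b)/2, where η ∈ C²_c(ℝ²) with support in [-R,R]², and 0 ≤ ε < ε₀ where ε₀ · max|η| < min_{|s| ≤ R} W(q₀(2s)). Then for every t, the maximal solution s ↦ q_ε(t,s) is defined on all of ℝ. Moreover q₀(2s) ≤ q_ε(t,s) ≤ (a+b)/2 for s ≤ 0 and (a+b)/2 ≤ q_ε(t,s) ≤ q₀(2s) for s ≥ 0 on the maximal interval. -/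
/-!
Write the perturbed solution as a time change `q = q₀ ∘ φ` of the optimal profile. Since
`q₀' = √(W ∘ q₀)`, the equation `q' = √(W q - h)` becomes `φ' = √(1 - h / W (q₀ φ))`, a
Lipschitz ODE as long as `W (q₀ φ)` stays above the minimum `M` of `W (q₀ (2s))` on `[-R, R]`,
and `|h| ≤ (ε / ε₀) M < M`. Then `0 ≤ φ' ≤ 2` and `φ 0 = 0` trap `φ s` between `0` and `2s`, so
`|φ s| ≤ 2R` while the perturbation is active, and `q₀ ∘ φ` lies between `q₀ 0` and `q₀ (2s)`.
-/

open Set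
open scoped NNReal

theorem exists_hasDerivAt_of_eq_const_of_lt_abs {E : Type*} [NormedAddCommGroup E]
    [NormedSpace ℝ E] [CompleteSpace E] {g : ℝ → E → E} {K C : ℝ≥0} {R : ℝ} {c : E} (x₀ : E)
    (hcont : ∀ x, Continuous (g · x)) (hlip : ∀ s, LipschitzWith K (g s))
    (hbound : ∀ s x, ‖g s x‖ ≤ C) (hconst : ∀ s x, R < |s| → g s x = c) :
    ∃ φ : ℝ → E, φ 0 = x₀ ∧ ∀ s, HasDerivAt φ (g s (φ s)) s := by
  set L : ℝ := |R|
  have hL : -L ≤ L := neg_le_self (abs_nonneg R)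
  have hpl : IsPicardLindelof g (tmin := -L) (tmax := L) ⟨0, by simp [L]⟩ x₀ (C * ‖R‖₊) 0 C K :=
    { lipschitzOnWith := fun s _ => (hlip s).lipschitzOnWith
      continuousOn := fun x _ => (hcont x).continuousOn
      norm_le := fun s _ x _ => hbound s x
      mul_max_le := by simp [L] }
  obtain ⟨α, hα0, hα⟩ := hpl.exists_eq_forall_mem_Icc_hasDerivWithinAt₀
  -- Integrating `g` along the local solution frozen outside `[-L, L]` extends it with slope `c`.
  set β : ℝ → E := fun s => α (projIcc (-L) L hL s)
  have hβ : Continuous β := ContinuousOn.comp_continuous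
    (fun s hs => (hα s hs).continuousWithinAt) (continuous_subtype_val.comp continuous_projIcc)
    (fun s => (projIcc (-L) L hL s).2)
  have hu : Continuous fun s => g s (β s) :=
    (continuous_prod_of_continuous_lipschitzWith' (Function.uncurry g) K hlip hcont).comp
      (continuous_id.prodMk hβ)
  set φ : ℝ → E := fun s => x₀ + ∫ τ in 0..s, g τ (β τ)
  have hφ : ∀ s, HasDerivAt φ (g s (β s)) s := fun s =>
    (hu.integral_hasStrictDerivAt 0 s).hasDerivAt.const_add x₀
  have hφα : ∀ s ∈ Icc (-L) L, φ s = α s := by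
    intro s hs
    have hdiff := (convex_Icc (-L) L).norm_image_sub_le_of_norm_hasDerivWithin_le
      (f := fun s => φ s - α s) (C := 0) (fun σ hσ => (hφ σ).hasDerivWithinAt.sub (hα σ hσ))
      (fun σ hσ => by simp [β, projIcc_of_mem hL hσ]) (show (0 : ℝ) ∈ Icc (-L) L by simp [L]) hs
    simpa [φ, hα0, sub_eq_zero] using hdiff
  refine ⟨φ, by simp [φ], fun s => ?_⟩
  convert hφ s using 1
  rcases le_or_gt |s| L with hs | hs
  · simp only [β, hφα s (abs_le.1 hs), projIcc_of_mem hL (abs_le.1 hs)]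
  · rw [hconst s _ ((le_abs_self R).trans_lt hs), hconst s _ ((le_abs_self R).trans_lt hs)]

theorem abs_sqrt_sub_sqrt_le {ρ u v : ℝ} (hρ : 0 < ρ) (hu : ρ ≤ u) (hv : ρ ≤ v) :
    |√u - √v| ≤ |u - v| / (2 * √ρ) := by
  have hsum : 2 * √ρ ≤ √u + √v := by
    linarith [Real.sqrt_le_sqrt hu, Real.sqrt_le_sqrt hv]
  have hfactor : u - v = (√u - √v) * (√u + √v) := by
    linear_combination -Real.sq_sqrt (hρ.le.trans hu) + Real.sq_sqrt (hρ.le.trans hv)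
  rw [le_div_iff₀ (by positivity), hfactor, abs_mul,
    abs_of_pos ((mul_pos two_pos (Real.sqrt_pos.2 hρ)).trans_le hsum)]
  exact mul_le_mul_of_nonneg_left hsum (abs_nonneg _)

theorem abs_inv_sub_inv_le {M u v : ℝ} (hM : 0 < M) (hu : M ≤ u) (hv : M ≤ v) :
    |u⁻¹ - v⁻¹| ≤ |u - v| / M ^ 2 := by
  have hu0 : 0 < u := hM.trans_le hu
  have hv0 : 0 < v := hM.trans_le hv
  rw [inv_sub_inv hu0.ne' hv0.ne', abs_div, abs_sub_comm, abs_of_pos (mul_pos hu0 hv0), sq]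
  exact div_le_div_of_nonneg_left (abs_nonneg _) (by positivity) (mul_le_mul hu hv hM.le hu0.le)

theorem abs_div_max_le {M B y : ℝ} (hM : 0 < M) (hy : |y| ≤ B) (v : ℝ) :
    |y / max M v| ≤ B / M := by
  have hmax : 0 < max M v := hM.trans_le (le_max_left _ _)
  rw [abs_div, abs_of_pos hmax]
  exact div_le_div₀ ((abs_nonneg _).trans hy) hy hM (le_max_left _ _)

/-- The speed of the time change `φ` for which `q₀ ∘ φ` solves `q' = √(W q - h)`, where
`V = W ∘ q₀`. The cut-off `max M` makes the field globally Lipschitz; it is inactive along the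
solution because `V (φ s) ≥ M` wherever `h s ≠ 0`. -/
noncomputable def reparamField (V h : ℝ → ℝ) (M s x : ℝ) : ℝ :=
  √(1 - h s / max M (V x))

section reparamField

variable {V h : ℝ → ℝ} {M B : ℝ}

theorem reparamField_le_two (hM : 0 < M) (hB : B < M) (hh : ∀ s, |h s| ≤ B) (s x : ℝ) :
    reparamField V h M s x ≤ 2 := by
  have := (abs_le.1 ((abs_div_max_le hM (hh s) (V x)).trans ((div_le_one hM).2 hB.le))).1
  rw [reparamField, Real.sqrt_le_left (by norm_num)]
  linarith

theorem exists_lipschitzWith_reparamField {K : ℝ≥0} (hV : LipschitzWith K V) (hM : 0 < M)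
    (hB : B < M) (hh : ∀ s, |h s| ≤ B) :
    ∃ K' : ℝ≥0, ∀ s, LipschitzWith K' (reparamField V h M s) := by
  set ρ := 1 - B / M
  have hρ : 0 < ρ := sub_pos.2 ((div_lt_one hM).2 hB)
  have hρle : ∀ s x, ρ ≤ 1 - h s / max M (V x) := fun s x => by
    linarith [(abs_le.1 (abs_div_max_le hM (hh s) (V x))).2]
  have hB0 : 0 ≤ B := (abs_nonneg _).trans (hh 0)
  refine ⟨Real.toNNReal (B * K / M ^ 2 / (2 * √ρ)), fun s => ?_⟩
  refine LipschitzWith.of_dist_le_mul fun x y => ?_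
  rw [Real.dist_eq, Real.dist_eq, Real.coe_toNNReal _ (by positivity)]
  calc |reparamField V h M s x - reparamField V h M s y|
      ≤ |h s * ((max M (V y))⁻¹ - (max M (V x))⁻¹)| / (2 * √ρ) := by
        refine (abs_sqrt_sub_sqrt_le hρ (hρle s x) (hρle s y)).trans_eq ?_
        ring_nf
    _ ≤ B * (K * |x - y| / M ^ 2) / (2 * √ρ) := by
        rw [abs_mul, abs_sub_comm]
        gcongr
        · exact hh s
        refine (abs_inv_sub_inv_le hM (le_max_left _ _) (le_max_left _ _)).trans ?_
        gcongr
        simpa [Real.dist_eq] using (hV.const_max M).dist_le_mul x y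
    _ = B * K / M ^ 2 / (2 * √ρ) * |x - y| := by ring

theorem exists_hasDerivAt_reparamField {K : ℝ≥0} {R : ℝ} (hV : LipschitzWith K V) (hM : 0 < M)
    (hB : B < M) (hh : ∀ s, |h s| ≤ B) (hcont : Continuous h) (hzero : ∀ s, R < |s| → h s = 0) :
    ∃ φ : ℝ → ℝ, φ 0 = 0 ∧ ∀ s, HasDerivAt φ (reparamField V h M s (φ s)) s := by
  obtain ⟨K', hK'⟩ := exists_lipschitzWith_reparamField hV hM hB hh
  refine exists_hasDerivAt_of_eq_const_of_lt_abs (R := R) (C := 2) (c := 1) 0 (fun x => ?_) hK'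
    (fun s x => ?_) (fun s x hs => by simp [reparamField, hzero s hs])
  · have hmax : 0 < max M (V x) := hM.trans_le (le_max_left _ _)
    unfold reparamField
    fun_prop (disch := positivity)
  · have := reparamField_le_two (V := V) hM hB hh s x
    unfold reparamField at *
    rwa [Real.norm_of_nonneg (Real.sqrt_nonneg _), NNReal.coe_ofNat]

theorem sqrt_mul_reparamField {s x : ℝ} (hVx : 0 < V x) (hcase : M ≤ V x ∨ h s = 0) :
    √(V x) * reparamField V h M s x = √(V x - h s) := by
  rcases hcase with hle | hzero
  · rw [reparamField, max_eq_right hle, ← Real.sqrt_mul hVx.le]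
    congr 1
    field_simp
  · simp [reparamField, hzero]

end reparamField

theorem sub_mem_Icc_of_hasDerivAt {f f' : ℝ → ℝ} {C : ℝ} (hf : ∀ s, HasDerivAt f (f' s) s)
    (hf' : ∀ s, f' s ∈ Icc 0 C) {x y : ℝ} (hxy : x ≤ y) : f y - f x ∈ Icc 0 (C * (y - x)) := by
  have hd : Differentiable ℝ f := fun s => (hf s).differentiableAt
  exact ⟨sub_nonneg.2 (monotone_of_deriv_nonneg hd (fun s => (hf s).deriv ▸ (hf' s).1) hxy),
    image_sub_le_mul_sub_of_deriv_le hd (fun s => (hf s).deriv ▸ (hf' s).2) hxy⟩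

theorem exists_hasDerivAt_comp_sqrt_sub {W q₀ h : ℝ → ℝ} {K : ℝ≥0} {M B R : ℝ}
    (hpos : ∀ y, 0 < W (q₀ y)) (hq₀ : ∀ s, HasDerivAt q₀ (√(W (q₀ s))) s)
    (hV : LipschitzWith K (W ∘ q₀)) (hMle : ∀ y, |y| ≤ 2 * R → M ≤ W (q₀ y))
    (hB : B < M) (hh : ∀ s, |h s| ≤ B) (hcont : Continuous h) (hzero : ∀ s, R < |s| → h s = 0) :
    ∃ φ : ℝ → ℝ, φ 0 = 0 ∧ (∀ s, HasDerivAt (q₀ ∘ φ) (√(W (q₀ (φ s)) - h s)) s) ∧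
      (∀ s ≤ 0, 2 * s ≤ φ s ∧ φ s ≤ 0) ∧ (∀ s, 0 ≤ s → 0 ≤ φ s ∧ φ s ≤ 2 * s) := by
  have hM : 0 < M := ((abs_nonneg _).trans (hh 0)).trans_lt hB
  obtain ⟨φ, hφ0, hφ⟩ := exists_hasDerivAt_reparamField hV hM hB hh hcont hzero
  have hφinc : ∀ x y, x ≤ y → φ y - φ x ∈ Icc 0 (2 * (y - x)) := fun x y =>
    sub_mem_Icc_of_hasDerivAt hφ fun s => ⟨Real.sqrt_nonneg _, reparamField_le_two hM hB hh s _⟩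
  have hφneg : ∀ s ≤ 0, 2 * s ≤ φ s ∧ φ s ≤ 0 := fun s hs => by
    have := hφinc s 0 hs
    rw [hφ0] at this
    constructor <;> linarith [this.1, this.2]
  have hφpos : ∀ s, 0 ≤ s → 0 ≤ φ s ∧ φ s ≤ 2 * s := fun s hs => by
    have := hφinc 0 s hs
    rw [hφ0] at this
    constructor <;> linarith [this.1, this.2]
  have hcase : ∀ s, M ≤ W (q₀ (φ s)) ∨ h s = 0 := fun s => by
    refine (le_or_gt |s| R).imp (fun hs => hMle _ (abs_le.2 ?_)) (hzero s)
    rcases le_total s 0 with hs0 | hs0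
    · constructor <;> linarith [hφneg s hs0, abs_le.1 hs]
    · constructor <;> linarith [hφpos s hs0, abs_le.1 hs]
  refine ⟨φ, hφ0, fun s => ?_, hφneg, hφpos⟩
  have hsqrt := sqrt_mul_reparamField (V := W ∘ q₀) (hpos (φ s)) (hcase s)
  exact hsqrt ▸ (hq₀ (φ s)).comp s (hφ s)

theorem exists_lipschitzWith_of_hasDerivAt_comp {q G : ℝ → ℝ} {S : Set ℝ} (hS : IsCompact S)
    (hG : ContinuousOn G S) (hqS : ∀ s, q s ∈ S) (hq : ∀ s, HasDerivAt q (G (q s)) s) :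
    ∃ K, LipschitzWith K q := by
  obtain ⟨C, hC⟩ := (hS.image_of_continuousOn hG.nnnorm).bddAbove
  refine ⟨C, lipschitzWith_of_nnnorm_deriv_le (fun s => (hq s).differentiableAt) fun s => ?_⟩
  rw [(hq s).deriv]
  exact hC ⟨q s, hqS s, rfl⟩

theorem exists_lipschitzWith_comp_of_hasDerivAt_sqrt {W q : ℝ → ℝ} {a b : ℝ} {n : WithTop ℕ∞}
    (hW : ContDiff ℝ n W) (hn : n ≠ 0) (hq_mem : ∀ s, q s ∈ Icc a b)
    (hq : ∀ s, HasDerivAt q (√(W (q s))) s) : ∃ K, LipschitzWith K (W ∘ q) := by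
  obtain ⟨Kq, hKq⟩ := exists_lipschitzWith_of_hasDerivAt_comp isCompact_Icc
    hW.continuous.sqrt.continuousOn hq_mem hq
  obtain ⟨KW, hKW⟩ := hW.contDiffOn.exists_lipschitzOnWith hn (convex_Icc a b) isCompact_Icc
  exact ⟨KW * Kq, lipschitzOnWith_univ.1 (hKW.comp hKq.lipschitzOnWith fun s _ => hq_mem s)⟩

theorem stmt16_general (W : ℝ → ℝ) (a b R ε₀ ε : ℝ)
    (hWC2 : ContDiff ℝ 2 W)
    (hWpos : ∀ u ∈ Set.Ioo a b, 0 < W u)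
    (q₀ : ℝ → ℝ) (hq₀mem : ∀ s, q₀ s ∈ Set.Ioo a b)
    (hq₀ : ∀ s, HasDerivAt q₀ (Real.sqrt (W (q₀ s))) s)
    (hq₀0 : q₀ 0 = (a + b) / 2)
    (hR : 0 < R) (η : ℝ × ℝ → ℝ) (hη : ContDiff ℝ 2 η)
    (hηsupp : Function.support η ⊆ Set.Icc (-R) R ×ˢ Set.Icc (-R) R)
    (hε₀ : 0 < ε₀)
    (hsmall : ∀ t s s' : ℝ, |s'| ≤ R → ε₀ * |η (t, s)| < W (q₀ (2 * s')))
    (hε : 0 ≤ ε) (hεlt : ε < ε₀) :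
    ∀ t : ℝ, ∃ q : ℝ → ℝ, q 0 = (a + b) / 2 ∧
      (∀ s, HasDerivAt q (Real.sqrt (W (q s) - ε * η (t, s))) s) ∧
      (∀ s ≤ 0, q₀ (2 * s) ≤ q s ∧ q s ≤ (a + b) / 2) ∧
      (∀ s, 0 ≤ s → (a + b) / 2 ≤ q s ∧ q s ≤ q₀ (2 * s)) := by
  intro t
  have hpos : ∀ y, 0 < W (q₀ y) := fun y => hWpos _ (hq₀mem y)
  obtain ⟨K, hV⟩ := exists_lipschitzWith_comp_of_hasDerivAt_sqrt hWC2 two_ne_zero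
    (fun s => Ioo_subset_Icc_self (hq₀mem s)) hq₀
  obtain ⟨y₀, hy₀, hmin⟩ := isCompact_Icc.exists_isMinOn
    (nonempty_Icc.2 (neg_le_self (mul_pos two_pos hR).le)) hV.continuous.continuousOn
  have hy₀R : |y₀ / 2| ≤ R := by rw [abs_le]; constructor <;> linarith [hy₀.1, hy₀.2]
  have hh : ∀ s, |ε * η (t, s)| ≤ ε / ε₀ * W (q₀ y₀) := fun s => by
    have hηM := hsmall t s (y₀ / 2) hy₀R
    rw [mul_div_cancel₀ y₀ two_ne_zero] at hηM
    rw [abs_mul, abs_of_nonneg hε, div_mul_eq_mul_div, le_div_iff₀ hε₀, mul_right_comm, mul_assoc]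
    exact mul_le_mul_of_nonneg_left hηM.le hε
  have hzero : ∀ s, R < |s| → ε * η (t, s) = 0 := fun s hs => by
    have : η (t, s) = 0 := Function.notMem_support.1 fun hts => hs.not_ge (abs_le.2 (hηsupp hts).2)
    simp [this]
  obtain ⟨φ, hφ0, hq, hφneg, hφpos⟩ := exists_hasDerivAt_comp_sqrt_sub hpos hq₀ hV
    (fun y hy => hmin (abs_le.1 hy)) (mul_lt_of_lt_one_left (hpos y₀) ((div_lt_one hε₀).2 hεlt))
    hh (by fun_prop) hzero
  have hq₀mono : Monotone q₀ := monotone_of_deriv_nonneg (fun s => (hq₀ s).differentiableAt)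
    fun s => (hq₀ s).deriv ▸ Real.sqrt_nonneg _
  refine ⟨q₀ ∘ φ, by simp [hφ0, hq₀0], hq, fun s hs => ?_, fun s hs => ?_⟩
  · exact ⟨hq₀mono (hφneg s hs).1, hq₀0 ▸ hq₀mono (hφneg s hs).2⟩
  · exact ⟨hq₀0 ▸ hq₀mono (hφpos s hs).1, hq₀mono (hφpos s hs).2⟩

/-- Lemma 2.4: for `0 ≤ ε < ε₀` (with `ε₀ max|η| < min_{|s|≤R} W(q₀(2s))`), the
perturbed profile equation `∂_s q = √(W(q) - ε η(t,s))`, `q(t,0) = (a+b)/2` has a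
globally defined solution, squeezed between `q₀(2s)` and `(a+b)/2`. -/
theorem stmt16 (W : ℝ → ℝ) (a b R ε₀ ε : ℝ) (hab : a < b)
    (hWnn : ∀ u, 0 ≤ W u) (hWC2 : ContDiff ℝ 2 W)
    (hWa : W a = 0) (hWb : W b = 0) (hWpos : ∀ u ∈ Set.Ioo a b, 0 < W u)
    (q₀ : ℝ → ℝ) (hq₀mem : ∀ s, q₀ s ∈ Set.Ioo a b)
    (hq₀ : ∀ s, HasDerivAt q₀ (Real.sqrt (W (q₀ s))) s)
    (hq₀0 : q₀ 0 = (a + b) / 2)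
    (hR : 0 < R) (η : ℝ × ℝ → ℝ) (hη : ContDiff ℝ 2 η)
    (hηsupp : Function.support η ⊆ Set.Icc (-R) R ×ˢ Set.Icc (-R) R)
    (hε₀ : 0 < ε₀)
    (hsmall : ∀ t s s' : ℝ, |s'| ≤ R → ε₀ * |η (t, s)| < W (q₀ (2 * s')))
    (hε : 0 ≤ ε) (hεlt : ε < ε₀) :
    ∀ t : ℝ, ∃ q : ℝ → ℝ, q 0 = (a + b) / 2 ∧
      (∀ s, HasDerivAt q (Real.sqrt (W (q s) - ε * η (t, s))) s) ∧
      (∀ s ≤ 0, q₀ (2 * s) ≤ q s ∧ q s ≤ (a + b) / 2) ∧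
      (∀ s, 0 ≤ s → (a + b) / 2 ≤ q s ∧ q s ≤ q₀ (2 * s)) :=
  stmt16_general W a b R ε₀ ε hWC2 hWpos q₀ hq₀mem hq₀ hq₀0 hR η hη hηsupp hε₀ hsmall hε hεlt
end
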